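/- arXiv:2104.13839 — 14 statements merged into one kernel-verified Lean document; each statement's English description precedes it below -/
import Mathlib

section
/- Consider the sparsity pattern on 3 states and 1 input defined by: edgeA i 0 holds for every i ∈ Fin 3 (edges from state node 0 to every state node, including a self-loop at node 0), no other edgeA-edges hold, edgeB 0 0 holds, and no other edgeB-edges hold. This pattern is structurally averaged controllable. -/
open Matrix

/-- A sparsity pattern `(edgeA, edgeB)` is structurally averaged controllable if some
compliant continuous ensemble pair `(A, B)` satisfies the averaged controllability
rank condition: the columns of `∫₀¹ A(σ)^k B(σ) dσ`, over all `k`, span `Fin n → ℝ`. -/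
def StructurallyAveragedControllable {n m : ℕ}
    (edgeA : Fin n → Fin n → Prop) (edgeB : Fin n → Fin m → Prop) : Prop :=
  ∃ (A : ℝ → Matrix (Fin n) (Fin n) ℝ) (B : ℝ → Matrix (Fin n) (Fin m) ℝ),
    Continuous A ∧ Continuous B ∧
    (∀ σ ∈ Set.Icc (0 : ℝ) 1, ∀ i j, ¬ edgeA i j → A σ i j = 0) ∧
    (∀ σ ∈ Set.Icc (0 : ℝ) 1, ∀ i l, ¬ edgeB i l → B σ i l = 0) ∧
    Submodule.span ℝ {c : Fin n → ℝ | ∃ (k : ℕ) (l : Fin m),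
      c = fun i => ∫ σ in (0 : ℝ)..1, ((A σ) ^ k * B σ) i l} = ⊤


noncomputable def Aw : ℝ → Matrix (Fin 3) (Fin 3) ℝ :=
  fun σ => !![σ, 0, 0; σ^2, 0, 0; σ^3, 0, 0]

noncomputable def Bw : ℝ → Matrix (Fin 3) (Fin 1) ℝ :=
  fun σ => !![1; 0; 0]

lemma contA : Continuous Aw := by
  refine continuous_pi fun i => continuous_pi fun j => ?_
  fin_cases i <;> fin_cases j <;> simp [Aw] <;> fun_prop

lemma contB : Continuous Bw := by
  refine continuous_pi fun i => continuous_pi fun j => ?_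
  fin_cases i <;> fin_cases j <;> simp [Bw] <;> fun_prop

lemma pow0 (σ : ℝ) : ((Aw σ) ^ 0 * Bw σ) = !![1; 0; 0] := by
  simp [Bw]

lemma pow1 (σ : ℝ) : ((Aw σ) ^ 1 * Bw σ) = !![σ; σ^2; σ^3] := by
  ext i j
  fin_cases i <;> fin_cases j <;>
    simp [Aw, Bw, Matrix.mul_apply, Fin.sum_univ_three]

lemma pow2 (σ : ℝ) : ((Aw σ) ^ 2 * Bw σ) = !![σ^2; σ^3; σ^4] := by
  have : (Aw σ) ^ 2 * Bw σ = Aw σ * ((Aw σ) ^ 1 * Bw σ) := by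
    rw [← Matrix.mul_assoc, ← pow_succ']
  rw [this, pow1]
  ext i j
  fin_cases i <;> fin_cases j <;>
    simp [Aw, Matrix.mul_apply, Fin.sum_univ_three] <;> ring

lemma int_pow (n : ℕ) : (∫ σ in (0:ℝ)..1, σ ^ n) = 1 / (n + 1) := by
  rw [integral_pow]; simp

lemma v0 : (fun i : Fin 3 => ∫ σ in (0:ℝ)..1, (((Aw σ) ^ 0 * Bw σ : Matrix (Fin 3) (Fin 1) ℝ)) i 0) = ![(1:ℝ), 0, 0] := by
  funext i
  fin_cases i <;> simp [Bw, Matrix.vecHead, Matrix.vecTail]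

lemma v1 : (fun i : Fin 3 => ∫ σ in (0:ℝ)..1, (((Aw σ) ^ 1 * Bw σ : Matrix (Fin 3) (Fin 1) ℝ)) i 0) = ![(1:ℝ)/2, 1/3, 1/4] := by
  funext i
  fin_cases i <;> simp only [pow1] <;>
    simp [int_pow 1, int_pow 2, int_pow 3] <;> norm_num [int_pow 1, int_pow 2, int_pow 3]

lemma v2 : (fun i : Fin 3 => ∫ σ in (0:ℝ)..1, (((Aw σ) ^ 2 * Bw σ : Matrix (Fin 3) (Fin 1) ℝ)) i 0) = ![(1:ℝ)/3, 1/4, 1/5] := by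
  funext i
  fin_cases i <;> simp only [pow2] <;>
    norm_num [int_pow 2, int_pow 3, int_pow 4]

/-- The sparsity pattern on 3 states and 1 input with edges from state node 0 to every
state node (including a self-loop at 0) and an edge from the input node to state node 0
is structurally averaged controllable. -/
theorem example_pattern_structurallyAveragedControllable :
    StructurallyAveragedControllable
      (fun (_ : Fin 3) (j : Fin 3) => j = 0)
      (fun (i : Fin 3) (_ : Fin 1) => i = 0) := by
  refine ⟨Aw, Bw, contA, contB, ?_, ?_, ?_⟩
  · intro σ _ i j hj
    fin_cases i <;> fin_cases j <;> simp_all [Aw, Matrix.vecHead, Matrix.vecTail]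
  · intro σ _ i l hi
    fin_cases i <;> fin_cases l <;> simp_all [Bw, Matrix.vecHead, Matrix.vecTail]
  · set S := {c : Fin 3 → ℝ | ∃ (k : ℕ) (l : Fin 1),
      c = fun i => ∫ σ in (0 : ℝ)..1, ((Aw σ) ^ k * Bw σ) i l} with hS
    have hv : ∀ k : ℕ,
        (fun i => ∫ σ in (0:ℝ)..1, ((Aw σ) ^ k * Bw σ) i 0) ∈ Submodule.span ℝ S :=
      fun k => Submodule.subset_span ⟨k, 0, rfl⟩
    have h0 : (![(1:ℝ), 0, 0] : Fin 3 → ℝ) ∈ Submodule.span ℝ S := v0 ▸ hv 0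
    have h1 : (![(1:ℝ)/2, 1/3, 1/4] : Fin 3 → ℝ) ∈ Submodule.span ℝ S := v1 ▸ hv 1
    have h2 : (![(1:ℝ)/3, 1/4, 1/5] : Fin 3 → ℝ) ∈ Submodule.span ℝ S := v2 ▸ hv 2
    rw [eq_top_iff]
    intro x _
    have e0 : (Pi.single (0 : Fin 3) (1:ℝ)) ∈ Submodule.span ℝ S := by
      have : (Pi.single (0 : Fin 3) (1:ℝ)) = ![(1:ℝ), 0, 0] := by
        funext i; fin_cases i <;> simp [Pi.single_apply, Fin.ext_iff]
      rw [this]; exact h0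
    have e1 : (Pi.single (1 : Fin 3) (1:ℝ)) ∈ Submodule.span ℝ S := by
      have : (Pi.single (1 : Fin 3) (1:ℝ)) =
          (-4:ℝ) • (![(1:ℝ), 0, 0] : Fin 3 → ℝ) + (48:ℝ) • (![(1:ℝ)/2, 1/3, 1/4] : Fin 3 → ℝ) + (-60:ℝ) • (![(1:ℝ)/3, 1/4, 1/5] : Fin 3 → ℝ) := by
        funext i; fin_cases i <;> norm_num [Pi.single_apply, Fin.ext_iff]
      rw [this]
      exact Submodule.add_mem _ (Submodule.add_mem _ (Submodule.smul_mem _ _ h0)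
        (Submodule.smul_mem _ _ h1)) (Submodule.smul_mem _ _ h2)
    have e2 : (Pi.single (2 : Fin 3) (1:ℝ)) ∈ Submodule.span ℝ S := by
      have : (Pi.single (2 : Fin 3) (1:ℝ)) =
          ((10:ℝ)/3) • (![(1:ℝ), 0, 0] : Fin 3 → ℝ) + (-60:ℝ) • (![(1:ℝ)/2, 1/3, 1/4] : Fin 3 → ℝ) + (80:ℝ) • (![(1:ℝ)/3, 1/4, 1/5] : Fin 3 → ℝ) := by
        funext i; fin_cases i <;> norm_num [Pi.single_apply, Fin.ext_iff]
      rw [this]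
      exact Submodule.add_mem _ (Submodule.add_mem _ (Submodule.smul_mem _ _ h0)
        (Submodule.smul_mem _ _ h1)) (Submodule.smul_mem _ _ h2)
    have hx : x = x 0 • (Pi.single (0:Fin 3) (1:ℝ) : Fin 3 → ℝ) + x 1 • (Pi.single (1:Fin 3) (1:ℝ) : Fin 3 → ℝ) + x 2 • (Pi.single (2:Fin 3) (1:ℝ) : Fin 3 → ℝ) := by
      funext i; fin_cases i <;> simp [Pi.single_apply, Fin.ext_iff]
    rw [hx]
    exact Submodule.add_mem _ (Submodule.add_mem _ (Submodule.smul_mem _ _ e0)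
      (Submodule.smul_mem _ _ e1)) (Submodule.smul_mem _ _ e2)
end

section
/- Let n ≥ 1 and m ≥ 1 and let (edgeA, edgeB) be a sparsity pattern on n states and m inputs. If the pattern is structurally averaged controllable, then it is accessible to the input nodes. -/
open Matrix

/-- If a sparsity pattern is structurally averaged controllable, then it is accessible
to the input nodes: every state node is reachable by a directed walk from some state
node that receives an input edge. -/
theorem structurallyAveragedControllable_implies_accessible
    (n m : ℕ) (hn : 1 ≤ n) (hm : 1 ≤ m)
    (edgeA : Fin n → Fin n → Prop) (edgeB : Fin n → Fin m → Prop)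
    (h : StructurallyAveragedControllable edgeA edgeB) :
    ∀ i : Fin n, ∃ (j : Fin n) (l : Fin m), edgeB j l ∧
      Relation.ReflTransGen (fun a b => edgeA b a) j i := by
  obtain ⟨A, B, -, -, hA0, hB0, hspan⟩ := h
  set Acc : Fin n → Prop := fun i => ∃ (j : Fin n) (l : Fin m), edgeB j l ∧
      Relation.ReflTransGen (fun a b => edgeA b a) j i with hAcc
  intro i₀
  by_contra hna
  -- key: entries at non-accessible nodes vanish
  have key : ∀ (k : ℕ) (σ : ℝ), σ ∈ Set.Icc (0:ℝ) 1 → ∀ i : Fin n, ¬ Acc i →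
      ∀ l : Fin m, ((A σ) ^ k * B σ) i l = 0 := by
    intro k
    induction k with
    | zero =>
      intro σ hσ i hi l
      rw [pow_zero, Matrix.one_mul]
      apply hB0 σ hσ
      intro hB
      exact hi ⟨i, l, hB, Relation.ReflTransGen.refl⟩
    | succ k ih =>
      intro σ hσ i hi l
      rw [pow_succ', Matrix.mul_assoc, Matrix.mul_apply]
      apply Finset.sum_eq_zero
      intro j _
      by_cases hij : edgeA i j
      · have hj : ¬ Acc j := by
          intro ⟨j₀, l₀, hB, hwalk⟩
          exact hi ⟨j₀, l₀, hB, hwalk.tail hij⟩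
        rw [ih σ hσ j hj l, mul_zero]
      · rw [hA0 σ hσ i j hij, zero_mul]
  -- each generator vanishes at i₀
  have hgen : ∀ c ∈ {c : Fin n → ℝ | ∃ (k : ℕ) (l : Fin m),
      c = fun i => ∫ σ in (0 : ℝ)..1, ((A σ) ^ k * B σ) i l}, c i₀ = 0 := by
    rintro c ⟨k, l, rfl⟩
    have : ∫ σ in (0 : ℝ)..1, ((A σ) ^ k * B σ) i₀ l = ∫ _ in (0 : ℝ)..1, (0:ℝ) := by
      apply intervalIntegral.integral_congr
      intro σ hσ
      rw [Set.uIcc_of_le (by norm_num : (0:ℝ) ≤ 1)] at hσ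
      exact key k σ hσ i₀ hna l
    simpa using this
  have hle : Submodule.span ℝ {c : Fin n → ℝ | ∃ (k : ℕ) (l : Fin m),
      c = fun i => ∫ σ in (0 : ℝ)..1, ((A σ) ^ k * B σ) i l} ≤
      LinearMap.ker (LinearMap.proj (R := ℝ) (φ := fun _ : Fin n => ℝ) i₀) := by
    rw [Submodule.span_le]
    intro c hc
    exact hgen c hc
  rw [hspan, top_le_iff] at hle
  have : (Pi.single i₀ 1 : Fin n → ℝ) i₀ = 0 := by
    have := hle ▸ (Submodule.mem_top (R := ℝ) (x := (Pi.single i₀ 1 : Fin n → ℝ)))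
    simpa using this
  simp at this
end

section
/- Let n ≥ 1 and m ≥ 1 and let (edgeA, edgeB) be a sparsity pattern on n states and m inputs. If the pattern is structurally averaged controllable, then for every k ∈ ℕ the cardinality Set.ncard (U k) is at most m · k. -/
open Matrix

/-- A walk of length `r ≥ 1` from input node `l` to state node `i`: a sequence of state
nodes `w 1, …, w r` with `edgeB (w 1) l`, `edgeA (w (s+1)) (w s)` for `1 ≤ s < r`, and
`w r = i`. -/
def WalkFromInput {n m : ℕ} (edgeA : Fin n → Fin n → Prop)
    (edgeB : Fin n → Fin m → Prop) (r : ℕ) (l : Fin m) (i : Fin n) : Prop :=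
  1 ≤ r ∧ ∃ w : ℕ → Fin n, edgeB (w 1) l ∧
    (∀ s, 1 ≤ s → s < r → edgeA (w (s + 1)) (w s)) ∧ w r = i

/-- `U edgeA edgeB k` is the set of state nodes `i` such that there is no walk of length
strictly greater than `k` from any input node to `i`. -/
def U {n m : ℕ} (edgeA : Fin n → Fin n → Prop)
    (edgeB : Fin n → Fin m → Prop) (k : ℕ) : Set (Fin n) :=
  {i | ¬ ∃ r, k < r ∧ ∃ l, WalkFromInput edgeA edgeB r l i}

/-- Extending a walk by one edge. -/
lemma walk_extend {n m : ℕ} {edgeA : Fin n → Fin n → Prop}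
    {edgeB : Fin n → Fin m → Prop} {r : ℕ} {l : Fin m} {j i : Fin n}
    (h : WalkFromInput edgeA edgeB r l j) (hij : edgeA i j) :
    WalkFromInput edgeA edgeB (r + 1) l i := by
  obtain ⟨hr, w, hB, hstep, hw⟩ := h
  refine ⟨le_trans hr (Nat.le_succ r), fun s => if s = r + 1 then i else w s, ?_, ?_, ?_⟩
  · simp only [show (1 : ℕ) ≠ r + 1 by omega, if_false]; exact hB
  · intro s hs1 hs2
    rcases eq_or_lt_of_le (Nat.lt_succ_iff.mp hs2) with heq | hlt
    · subst heq
      simp only [if_pos rfl, show s ≠ s + 1 by omega, if_false, hw]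
      exact hij
    · simp only [show s + 1 ≠ r + 1 by omega, show s ≠ r + 1 by omega, if_false]
      exact hstep s hs1 hlt
  · simp

/-- If there is no walk of length `k+1` from input `l` to state `i`, then the `(i,l)`
entry of `A(σ)^k B(σ)` vanishes for any compliant pair. -/
lemma entry_zero {n m : ℕ} {edgeA : Fin n → Fin n → Prop}
    {edgeB : Fin n → Fin m → Prop}
    {A : ℝ → Matrix (Fin n) (Fin n) ℝ} {B : ℝ → Matrix (Fin n) (Fin m) ℝ}
    (hA : ∀ σ ∈ Set.Icc (0 : ℝ) 1, ∀ i j, ¬ edgeA i j → A σ i j = 0)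
    (hB : ∀ σ ∈ Set.Icc (0 : ℝ) 1, ∀ i l, ¬ edgeB i l → B σ i l = 0)
    {σ : ℝ} (hσ : σ ∈ Set.Icc (0 : ℝ) 1) (k : ℕ) (l : Fin m) :
    ∀ i : Fin n, ¬ WalkFromInput edgeA edgeB (k + 1) l i →
      ((A σ) ^ k * B σ) i l = 0 := by
  induction k with
  | zero =>
    intro i hnw
    rw [pow_zero, Matrix.one_mul]
    refine hB σ hσ i l fun hedge => hnw ?_
    exact ⟨le_refl 1, fun _ => i, hedge, fun s hs1 hs2 => absurd hs2 (by omega), rfl⟩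
  | succ k ih =>
    intro i hnw
    rw [pow_succ', Matrix.mul_assoc, Matrix.mul_apply]
    refine Finset.sum_eq_zero fun j _ => ?_
    by_cases hij : edgeA i j
    · have hj : ¬ WalkFromInput edgeA edgeB (k + 1) l j := fun hw =>
        hnw (walk_extend hw hij)
      rw [ih j hj, mul_zero]
    · rw [hA σ hσ i j hij, zero_mul]

/-- If `i ∈ U(k)` and `k ≤ r` then the `(i,l)` entry of `∫₀¹ A(σ)^r B(σ) dσ` vanishes. -/
lemma integral_entry_zero {n m : ℕ} {edgeA : Fin n → Fin n → Prop}
    {edgeB : Fin n → Fin m → Prop}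
    {A : ℝ → Matrix (Fin n) (Fin n) ℝ} {B : ℝ → Matrix (Fin n) (Fin m) ℝ}
    (hA : ∀ σ ∈ Set.Icc (0 : ℝ) 1, ∀ i j, ¬ edgeA i j → A σ i j = 0)
    (hB : ∀ σ ∈ Set.Icc (0 : ℝ) 1, ∀ i l, ¬ edgeB i l → B σ i l = 0)
    {k r : ℕ} (hkr : k ≤ r) (l : Fin m) {i : Fin n} (hi : i ∈ U edgeA edgeB k) :
    (∫ σ in (0 : ℝ)..1, ((A σ) ^ r * B σ) i l) = 0 := by
  have heq : Set.EqOn (fun σ => ((A σ) ^ r * B σ) i l) 0 (Set.uIcc (0 : ℝ) 1) := by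
    intro σ hσ
    rw [Set.uIcc_of_le zero_le_one] at hσ
    have hnw : ¬ WalkFromInput edgeA edgeB (r + 1) l i := fun hw =>
      hi ⟨r + 1, by omega, l, hw⟩
    exact entry_zero hA hB hσ r l i hnw
  rw [intervalIntegral.integral_congr heq]
  simp

/-- If a sparsity pattern on `n` states and `m` inputs is structurally averaged
controllable, then for every `k` the cardinality of `U(k)` is at most `m * k`. -/
theorem structurallyAveragedControllable_card_U_le
    (n m : ℕ) (hn : 1 ≤ n) (hm : 1 ≤ m)
    (edgeA : Fin n → Fin n → Prop) (edgeB : Fin n → Fin m → Prop)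
    (h : StructurallyAveragedControllable edgeA edgeB) :
    ∀ k : ℕ, (U edgeA edgeB k).ncard ≤ m * k := by
  intro k
  obtain ⟨A, B, _, _, hA, hB, hspan⟩ := h
  classical
  set S := U edgeA edgeB k with hS
  haveI : Fintype ↥S := Set.Finite.fintype (Set.toFinite S)
  set π : (Fin n → ℝ) →ₗ[ℝ] (↥S → ℝ) := LinearMap.funLeft ℝ ℝ ((↑) : ↥S → Fin n) with hπ
  have hsurj : Function.Surjective π :=
    LinearMap.funLeft_surjective_of_injective ℝ ℝ _ Subtype.val_injective
  set v : Fin k × Fin m → (↥S → ℝ) :=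
    fun p x => ∫ σ in (0 : ℝ)..1, ((A σ) ^ (p.1 : ℕ) * B σ) (x : Fin n) p.2 with hv
  have htop : Submodule.span ℝ (Set.range v) = ⊤ := by
    rw [eq_top_iff]
    have h1 : Submodule.map π ⊤ = ⊤ := by
      rw [Submodule.map_top, LinearMap.range_eq_top]; exact hsurj
    rw [← h1, ← hspan, Submodule.map_span]
    refine Submodule.span_le.mpr ?_
    rintro _ ⟨c, ⟨r, l, rfl⟩, rfl⟩
    by_cases hrk : r < k
    · exact Submodule.subset_span ⟨(⟨r, hrk⟩, l), rfl⟩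
    · have : π (fun i => ∫ σ in (0 : ℝ)..1, ((A σ) ^ r * B σ) i l) = 0 := by
        funext x
        exact integral_entry_zero hA hB (Nat.le_of_not_lt hrk) l x.2
      rw [this]
      exact Submodule.zero_mem _
  have hfr : Module.finrank ℝ (↥S → ℝ) ≤ Fintype.card (Fin k × Fin m) :=
    finrank_le_of_span_eq_top htop
  rw [Module.finrank_pi, Fintype.card_prod, Fintype.card_fin, Fintype.card_fin] at hfr
  calc S.ncard = Nat.card ↥S := (Nat.card_coe_set_eq S).symm
    _ = Fintype.card ↥S := Nat.card_eq_fintype_card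
    _ ≤ k * m := hfr
    _ = m * k := Nat.mul_comm k m
end

section
/- Let n ≥ 1 and let (edgeA, edgeB) be a sparsity pattern on n states and 1 input. Let N_in be the set of in-neighbors of the whole state set: the state nodes j such that edgeA i j holds for some state node i, together with the input nodes l such that edgeB i l holds for some state node i (a subset of Fin n ⊕ Fin 1). If the pattern is structurally averaged controllable and Set.ncard N_in < n, then the digraph is not acyclic: there exists a state node v with Relation.TransGen (fun a b => edgeA b a) v v. -/
open Matrix


lemma pow_entry_chain {n : ℕ} {edgeA : Fin n → Fin n → Prop}
    (M : Matrix (Fin n) (Fin n) ℝ) (hM : ∀ i j, ¬ edgeA i j → M i j = 0) :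
    ∀ k i j, (M ^ k) i j ≠ 0 →
      ∃ c : ℕ → Fin n, c 0 = j ∧ c k = i ∧ ∀ t < k, edgeA (c (t + 1)) (c t) := by
  intro k
  induction k with
  | zero =>
    intro i j hij
    rw [pow_zero] at hij
    have : i = j := by by_contra hne; exact hij (Matrix.one_apply_ne hne)
    exact ⟨fun _ => j, rfl, by simp [this], by intro t ht; omega⟩
  | succ k ih =>
    intro i j hij
    rw [pow_succ', Matrix.mul_apply] at hij
    obtain ⟨m, hm⟩ := Finset.exists_ne_zero_of_sum_ne_zero hij
    have h1 : M i m ≠ 0 := fun h => hm.2 (by simp [h])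
    have h2 : (M ^ k) m j ≠ 0 := fun h => hm.2 (by simp [h])
    have hedge : edgeA i m := by by_contra hne; exact h1 (hM i m hne)
    obtain ⟨c, hc0, hck, hc⟩ := ih m j h2
    refine ⟨fun t => if t = k + 1 then i else c t, by simp [hc0], by simp, ?_⟩
    intro t ht
    rcases Nat.lt_succ_iff_lt_or_eq.mp ht with ht' | ht'
    · have e1 : t + 1 ≠ k + 1 := by omega
      have e2 : t ≠ k + 1 := by omega
      simpa [e1, e2, show t ≠ k by omega] using hc t ht'
    · subst ht'
      have e2 : t ≠ t + 1 := by omega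
      simpa [e2, hck] using hedge

lemma chain_transGen {n : ℕ} {edgeA : Fin n → Fin n → Prop}
    (c : ℕ → Fin n) (k : ℕ) (hc : ∀ t < k, edgeA (c (t + 1)) (c t)) :
    ∀ b a, a < b → b ≤ k → Relation.TransGen (fun x y => edgeA y x) (c a) (c b) := by
  intro b
  induction b with
  | zero => intro a ha _; omega
  | succ b ih =>
    intro a ha hbk
    rcases Nat.lt_succ_iff_lt_or_eq.mp ha with h | h
    · exact (ih a h (by omega)).tail (hc b (by omega))
    · subst h; exact Relation.TransGen.single (hc a (by omega))

theorem structurallyAveragedControllable_not_acyclic'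
    (n : ℕ) (hn : 1 ≤ n)
    (edgeA : Fin n → Fin n → Prop) (edgeB : Fin n → Fin 1 → Prop)
    (h : ∃ (A : ℝ → Matrix (Fin n) (Fin n) ℝ) (B : ℝ → Matrix (Fin n) (Fin 1) ℝ),
      Continuous A ∧ Continuous B ∧
      (∀ σ ∈ Set.Icc (0 : ℝ) 1, ∀ i j, ¬ edgeA i j → A σ i j = 0) ∧
      (∀ σ ∈ Set.Icc (0 : ℝ) 1, ∀ i l, ¬ edgeB i l → B σ i l = 0) ∧
      Submodule.span ℝ {c : Fin n → ℝ | ∃ (k : ℕ) (l : Fin 1),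
        c = fun i => ∫ σ in (0 : ℝ)..1, ((A σ) ^ k * B σ) i l} = ⊤)
    (hcard : Set.ncard {x : Fin n ⊕ Fin 1 |
        Sum.elim (fun j => ∃ i, edgeA i j) (fun l => ∃ i, edgeB i l) x} < n) :
    ∃ v : Fin n, Relation.TransGen (fun a b => edgeA b a) v v := by
  by_contra hcyc
  push_neg at hcyc
  obtain ⟨A, B, hA, hB, hA0, hB0, hspan⟩ := h
  set N := {x : Fin n ⊕ Fin 1 |
      Sum.elim (fun j => ∃ i, edgeA i j) (fun l => ∃ i, edgeB i l) x} with hN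
  set d := Set.ncard N with hd
  -- Key: for k ≥ d and σ ∈ [0,1] the matrix (A σ)^k * B σ vanishes.
  have key : ∀ k, d ≤ k → ∀ σ ∈ Set.Icc (0:ℝ) 1, ∀ (i : Fin n) (l : Fin 1),
      ((A σ) ^ k * B σ) i l = 0 := by
    intro k hk σ hσ i l
    by_contra hne
    rw [Matrix.mul_apply] at hne
    obtain ⟨j, hj⟩ := Finset.exists_ne_zero_of_sum_ne_zero hne
    have h1 : ((A σ) ^ k) i j ≠ 0 := fun hz => hj.2 (by simp [hz])
    have h2 : B σ j l ≠ 0 := fun hz => hj.2 (by simp [hz])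
    have hBe : edgeB j l := by by_contra hcon; exact h2 (hB0 σ hσ j l hcon)
    obtain ⟨c, hc0, hck, hc⟩ :=
      pow_entry_chain (A σ) (fun i' j' hij => hA0 σ hσ i' j' hij) k i j h1
    have hmemA : ∀ t, t < k → (Sum.inl (c t) : Fin n ⊕ Fin 1) ∈ N :=
      fun t ht => ⟨c (t + 1), hc t ht⟩
    have hmemB : (Sum.inr l : Fin n ⊕ Fin 1) ∈ N := ⟨j, hBe⟩
    let g : Fin (k + 1) → ↥N := fun t =>
      if ht : (t : ℕ) = 0 then ⟨Sum.inr l, hmemB⟩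
      else ⟨Sum.inl (c ((t : ℕ) - 1)), hmemA _ (by have := t.isLt; omega)⟩
    have hval : ∀ a b : Fin (k + 1), (a : ℕ) < (b : ℕ) → g a ≠ g b := by
      intro a b hlt heq
      have hb0 : (b : ℕ) ≠ 0 := by omega
      by_cases ha0 : (a : ℕ) = 0
      · simp [g, ha0, hb0, show a = 0 by simpa using ha0, show b ≠ 0 by simpa using hb0] at heq
      · simp [g, ha0, hb0, show a ≠ 0 by simpa using ha0, show b ≠ 0 by simpa using hb0] at heq
        have htg : Relation.TransGen (fun x y => edgeA y x)
            (c ((a : ℕ) - 1)) (c ((b : ℕ) - 1)) :=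
          chain_transGen c k hc _ _ (by omega) (by have := b.isLt; omega)
        rw [heq] at htg
        exact hcyc _ htg
    have hginj : Function.Injective g := by
      intro a b hab
      rcases lt_trichotomy (a : ℕ) (b : ℕ) with hab' | hab' | hab'
      · exact absurd hab (hval a b hab')
      · exact Fin.ext hab'
      · exact absurd hab.symm (hval b a hab')
    have hle : k + 1 ≤ d := by
      have h1 := Nat.card_le_card_of_injective g hginj
      simpa [Nat.card_coe_set_eq, hd] using h1
    omega
  -- Hence the integrated columns vanish for k ≥ d.
  have hint : ∀ k, d ≤ k → ∀ l : Fin 1,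
      (fun i => ∫ σ in (0:ℝ)..1, ((A σ) ^ k * B σ) i l) = (0 : Fin n → ℝ) := by
    intro k hk l
    funext i
    have heq : Set.EqOn (fun σ => ((A σ) ^ k * B σ) i l) (fun _ => (0:ℝ))
        (Set.uIcc (0:ℝ) 1) := by
      intro σ hσ
      rw [Set.uIcc_of_le zero_le_one] at hσ
      exact key k hk σ hσ i l
    show (∫ σ in (0:ℝ)..1, ((A σ) ^ k * B σ) i l) = 0
    rw [intervalIntegral.integral_congr heq]
    simp
  -- The span is generated by at most d vectors, contradiction with n ≤ d.
  let f : Fin d → (Fin n → ℝ) :=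
    fun k => fun i => ∫ σ in (0:ℝ)..1, ((A σ) ^ (k : ℕ) * B σ) i 0
  have hsub : {c : Fin n → ℝ | ∃ (k : ℕ) (l : Fin 1),
      c = fun i => ∫ σ in (0:ℝ)..1, ((A σ) ^ k * B σ) i l} ⊆
      insert (0 : Fin n → ℝ) (Set.range f) := by
    rintro c ⟨k, l, rfl⟩
    have hl : l = 0 := Subsingleton.elim _ _
    subst hl
    by_cases hk : k < d
    · exact Set.mem_insert_of_mem _ ⟨⟨k, hk⟩, rfl⟩
    · exact Set.mem_insert_iff.mpr (Or.inl (hint k (le_of_not_gt hk) 0))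
  have hspan2 : Submodule.span ℝ (Set.range f) = ⊤ := by
    have hmono := Submodule.span_mono (R := ℝ) hsub
    rw [hspan, Submodule.span_insert_zero] at hmono
    exact le_antisymm le_top hmono
  have hfin : Module.finrank ℝ (Fin n → ℝ) ≤ Fintype.card (Fin d) :=
    finrank_le_of_span_eq_top hspan2
  have : n ≤ d := by simpa [Module.finrank_fin_fun] using hfin
  omega


/-- For a structurally averaged controllable sparsity pattern on `n` states and one
input, if the set of in-neighbors of the whole state set (state nodes `j` with an edge
to some state node, together with input nodes `l` with an edge to some state node) has
fewer than `n` elements, then the digraph is not acyclic: some state node lies on a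
directed cycle of `edgeA`-edges. -/
theorem structurallyAveragedControllable_not_acyclic
    (n : ℕ) (hn : 1 ≤ n)
    (edgeA : Fin n → Fin n → Prop) (edgeB : Fin n → Fin 1 → Prop)
    (h : StructurallyAveragedControllable edgeA edgeB)
    (hcard : Set.ncard {x : Fin n ⊕ Fin 1 |
        Sum.elim (fun j => ∃ i, edgeA i j) (fun l => ∃ i, edgeB i l) x} < n) :
    ∃ v : Fin n, Relation.TransGen (fun a b => edgeA b a) v v :=
  structurallyAveragedControllable_not_acyclic' n hn edgeA edgeB h hcard
end

section
/- Let n ≥ 1 and m ≥ 1 and let (edgeA, edgeB) be a sparsity pattern on n states and m inputs that is structurally averaged controllable. Suppose there exist a set S of state nodes and an input node l₀ such that every in-neighbor of S lies in S ∪ {l₀} (for all state nodes i ∈ S and all state nodes j, edgeA i j → j ∈ S; and for all i ∈ S and all input nodes l, edgeB i l → l = l₀), and the number of in-neighbors of S, namely Set.ncard {j : Fin n | ∃ i ∈ S, edgeA i j} + Set.ncard {l : Fin m | ∃ i ∈ S, edgeB i l}, is strictly less than Set.ncard S. Then the subgraph of the pattern induced by S contains a directed cycle: there exists v ∈ S with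 Relation.TransGen (fun a b => a ∈ S ∧ b ∈ S ∧ edgeA b a) v v. -/
open Matrix

/-- Let `(edgeA, edgeB)` be a structurally averaged controllable sparsity pattern.
If a set `S` of state nodes and an input node `l₀` are such that every in-neighbor of
`S` lies in `S ∪ {l₀}` and the number of in-neighbors of `S` is strictly less than the
cardinality of `S`, then the subgraph induced by `S` contains a directed cycle. -/
theorem structurallyAveragedControllable_subset_cycle
    (n m : ℕ) (hn : 1 ≤ n) (hm : 1 ≤ m)
    (edgeA : Fin n → Fin n → Prop) (edgeB : Fin n → Fin m → Prop)
    (h : StructurallyAveragedControllable edgeA edgeB)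
    (S : Set (Fin n)) (l₀ : Fin m)
    (hSA : ∀ i ∈ S, ∀ j : Fin n, edgeA i j → j ∈ S)
    (hSB : ∀ i ∈ S, ∀ l : Fin m, edgeB i l → l = l₀)
    (hcard : Set.ncard {j : Fin n | ∃ i ∈ S, edgeA i j} +
        Set.ncard {l : Fin m | ∃ i ∈ S, edgeB i l} < S.ncard) :
    ∃ v ∈ S, Relation.TransGen (fun a b => a ∈ S ∧ b ∈ S ∧ edgeA b a) v v := by
  by_contra hcyc
  push_neg at hcyc
  obtain ⟨A, B, hAc, hBc, hAsp, hBsp, hspan⟩ := h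
  set NA := {j : Fin n | ∃ i ∈ S, edgeA i j} with hNAdef
  set NB := {l : Fin m | ∃ i ∈ S, edgeB i l} with hNBdef
  set d := NA.ncard + NB.ncard with hddef
  -- Every nonzero entry of `A^k B` in a row of `S` comes from a path inside `S`
  -- ending with an input edge from `l₀`.
  have key : ∀ σ ∈ Set.Icc (0:ℝ) 1, ∀ k (i : Fin n), i ∈ S → ∀ l,
      ((A σ) ^ k * B σ) i l ≠ 0 →
      l = l₀ ∧ ∃ x : ℕ → Fin n, x k = i ∧ (∀ a, a ≤ k → x a ∈ S) ∧
        (∀ a, a < k → edgeA (x (a+1)) (x a)) ∧ edgeB (x 0) l₀ := by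
    intro σ hσ k
    induction k with
    | zero =>
      intro i hi l hne
      rw [pow_zero, Matrix.one_mul] at hne
      have hB : edgeB i l := by
        by_contra hc; exact hne (hBsp σ hσ i l hc)
      have hl : l = l₀ := hSB i hi l hB
      exact ⟨hl, fun _ => i, rfl, fun a _ => hi,
        fun a ha => absurd ha (Nat.not_lt_zero a), hl ▸ hB⟩
    | succ k ih =>
      intro i hi l hne
      rw [pow_succ', Matrix.mul_assoc, Matrix.mul_apply] at hne
      obtain ⟨j, -, hj⟩ := Finset.exists_ne_zero_of_sum_ne_zero hne
      have hAij : A σ i j ≠ 0 := fun hc => hj (by rw [hc, zero_mul])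
      have hrest : ((A σ) ^ k * B σ) j l ≠ 0 := fun hc => hj (by rw [hc, mul_zero])
      have hedge : edgeA i j := by
        by_contra hc; exact hAij (hAsp σ hσ i j hc)
      have hjS : j ∈ S := hSA i hi j hedge
      obtain ⟨hl, x, hxk, hxS, hxE, hxB⟩ := ih j hjS l hrest
      refine ⟨hl, fun a => if a = k + 1 then i else x a, by simp, ?_, ?_, ?_⟩
      · intro a ha
        by_cases hc : a = k + 1
        · simpa [hc] using hi
        · simpa [hc] using hxS a (by omega)
      · intro a ha
        by_cases hc : a = k
        · subst hc
          simpa [hxk, (by omega : a ≠ a + 1)] using hedge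
        · have h1 : a + 1 ≠ k + 1 := by omega
          have h2 : a ≠ k + 1 := by omega
          simpa [h1, h2, hc] using hxE a (by omega)
      · simpa using hxB
  -- A path as above forces `k < d`, by acyclicity.
  have kbound : ∀ k (x : ℕ → Fin n), (∀ a, a ≤ k → x a ∈ S) →
      (∀ a, a < k → edgeA (x (a+1)) (x a)) → edgeB (x 0) l₀ → k < d := by
    intro k x hxS hxE hxB
    have hchain : ∀ a b : ℕ, a < b → b ≤ k →
        Relation.TransGen (fun a b => a ∈ S ∧ b ∈ S ∧ edgeA b a) (x a) (x b) := by
      intro a b hab hbk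
      induction b, hab using Nat.le_induction with
      | base =>
        exact Relation.TransGen.single
          ⟨hxS a (by omega), hxS (a+1) hbk, hxE a (by omega)⟩
      | succ b hb ih =>
        exact (ih (by omega)).tail
          ⟨hxS b (by omega), hxS (b+1) hbk, hxE b (by omega)⟩
    have hinj : Function.Injective (fun a : Fin k => x a) := by
      intro a b hab
      have hab' : x (a:ℕ) = x (b:ℕ) := hab
      by_contra hne
      rcases lt_or_gt_of_ne (fun hc : (a:ℕ) = (b:ℕ) => hne (Fin.ext hc)) with hlt | hlt
      · exact hcyc (x a) (hxS a (by omega))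
          (hab' ▸ hchain a b hlt (by omega))
      · exact hcyc (x b) (hxS b (by omega))
          (hab'.symm ▸ hchain b a hlt (by omega))
    have hmem : ∀ a : Fin k, x a ∈ NA := by
      intro a
      exact ⟨x (a + 1), hxS (a+1) (by omega), hxE a a.isLt⟩
    have hkNA : k ≤ NA.ncard := by
      have : Function.Injective (fun a : Fin k => (⟨x a, hmem a⟩ : ↥NA)) := by
        intro a b hab
        exact hinj (congrArg Subtype.val hab)
      have := Nat.card_le_card_of_injective _ this
      simpa [Nat.card_eq_fintype_card, Nat.card_coe_set_eq] using this
    have hNB : 1 ≤ NB.ncard := by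
      have hne : NB.Nonempty := ⟨l₀, ⟨x 0, hxS 0 (by omega), hxB⟩⟩
      have := (Set.ncard_pos (Set.toFinite NB)).mpr hne
      omega
    omega
  -- Hence all high powers (and all columns other than `l₀`) vanish on rows of `S`.
  have hzero : ∀ σ ∈ Set.Icc (0:ℝ) 1, ∀ k (l : Fin m) (i : Fin n), i ∈ S →
      (l ≠ l₀ ∨ d ≤ k) → ((A σ) ^ k * B σ) i l = 0 := by
    intro σ hσ k l i hi hcond
    by_contra hne
    obtain ⟨hl, x, -, hxS, hxE, hxB⟩ := key σ hσ k i hi l hne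
    have := kbound k x hxS hxE hxB
    rcases hcond with hc | hc
    · exact hc hl
    · omega
  -- Linear algebra : project everything to the coordinates in `S`.
  haveI : Fintype ↥S := Fintype.ofFinite _
  set π : (Fin n → ℝ) →ₗ[ℝ] (↥S → ℝ) :=
    LinearMap.funLeft ℝ ℝ (fun i : ↥S => (i : Fin n)) with hπdef
  have hπsurj : Function.Surjective π :=
    LinearMap.funLeft_surjective_of_injective ℝ ℝ _ Subtype.val_injective
  set gens : Set (Fin n → ℝ) := {c : Fin n → ℝ | ∃ (k : ℕ) (l : Fin m),
      c = fun i => ∫ σ in (0 : ℝ)..1, ((A σ) ^ k * B σ) i l} with hgens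
  have htop : Submodule.span ℝ (π '' gens) = ⊤ := by
    rw [← Submodule.map_span, hspan, Submodule.map_top, LinearMap.range_eq_top.mpr hπsurj]
  set w : Fin d → (↥S → ℝ) :=
    fun a => fun i : ↥S => ∫ σ in (0 : ℝ)..1, ((A σ) ^ (a : ℕ) * B σ) (i : Fin n) l₀ with hwdef
  have hVle : Submodule.span ℝ (π '' gens) ≤ Submodule.span ℝ (Set.range w) := by
    rw [Submodule.span_le]
    rintro c ⟨c', ⟨k, l, rfl⟩, rfl⟩
    by_cases hc : l = l₀ ∧ k < d
    · obtain ⟨hl, hk⟩ := hc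
      apply Submodule.subset_span
      exact ⟨⟨k, hk⟩, by subst hl; rfl⟩
    · have hcond : l ≠ l₀ ∨ d ≤ k := by
        by_contra hcc
        push_neg at hcc
        exact hc ⟨hcc.1, by omega⟩
      have hz : π (fun i => ∫ σ in (0:ℝ)..1, ((A σ) ^ k * B σ) i l) = 0 := by
        funext i
        show (∫ σ in (0:ℝ)..1, ((A σ) ^ k * B σ) (i : Fin n) l) = 0
        have heq : Set.EqOn (fun σ => ((A σ) ^ k * B σ) (i : Fin n) l)
            (fun _ => (0:ℝ)) (Set.uIcc (0:ℝ) 1) := by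
          intro σ hσ
          rw [Set.uIcc_of_le (by norm_num : (0:ℝ) ≤ 1)] at hσ
          exact hzero σ hσ k l i i.2 hcond
        rw [intervalIntegral.integral_congr heq]
        simp
      rw [hz]
      exact Submodule.zero_mem _
  have hwtop : Submodule.span ℝ (Set.range w) = ⊤ :=
    top_le_iff.mp (htop ▸ hVle)
  have hfr1 : Module.finrank ℝ (↥S → ℝ) ≤ d := by
    have h1 := finrank_range_le_card (R := ℝ) w
    rw [Set.finrank, hwtop] at h1
    simpa [finrank_top] using h1
  have hfr2 : Module.finrank ℝ (↥S → ℝ) = S.ncard := by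
    rw [Module.finrank_fintype_fun_eq_card, ← Nat.card_coe_set_eq,
      Nat.card_eq_fintype_card]
  omega
end

section
/- Let n ≥ 1 and let (edgeA, edgeB) be a sparsity pattern on n states and 1 input such that edgeB 0 0 holds (an edge from the input node to state node 0), edgeA 0 0 holds (a self-loop at state node 0), and edgeA i 0 holds for every state node i (an edge from state node 0 to every other state node). Then the pattern is structurally averaged controllable. -/
open Matrix

namespace StarPatternAux

variable (n : ℕ) [NeZero n]

/-- The state ensemble matrix: column `0` has entries `σ^(i+1)`, all else zero. -/
noncomputable def Amat (σ : ℝ) : Matrix (Fin n) (Fin n) ℝ :=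
  Matrix.of fun i j => if j = 0 then σ ^ ((i : ℕ) + 1) else 0

/-- The input ensemble matrix: entry `(0,0)` is `1`, all else zero. -/
noncomputable def Bmat (σ : ℝ) : Matrix (Fin n) (Fin 1) ℝ :=
  Matrix.of fun i _ => if i = 0 then 1 else 0

lemma pow_mul_eq (σ : ℝ) (k : ℕ) :
    (Amat n σ) ^ (k + 1) * Bmat n σ =
      Matrix.of (fun (i : Fin n) (_ : Fin 1) => (σ ^ ((i : ℕ) + 1 + k) : ℝ)) := by
  induction k with
  | zero =>
    ext i l
    simp [Amat, Bmat, Matrix.mul_apply, ite_and, Finset.sum_ite_eq']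
  | succ k ih =>
    have : (Amat n σ) ^ (k + 1 + 1) = Amat n σ * (Amat n σ) ^ (k + 1) := by
      rw [pow_succ']
    rw [this, Matrix.mul_assoc, ih]
    ext i l
    simp [Amat, Matrix.mul_apply, Finset.sum_ite_eq']
    ring

lemma col_eq (k : ℕ) :
    (fun i : Fin n => ∫ σ in (0 : ℝ)..1, ((Amat n σ) ^ (k + 1) * Bmat n σ) i 0) =
      fun i : Fin n => (1 : ℝ) / ((i : ℕ) + k + 2) := by
  funext i
  have h : ∀ σ : ℝ, ((Amat n σ) ^ (k + 1) * Bmat n σ) i 0 = σ ^ ((i : ℕ) + 1 + k) := by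
    intro σ; rw [pow_mul_eq]; rfl
  simp only [h]
  rw [integral_pow]
  push_cast
  ring_nf

end StarPatternAux

open StarPatternAux

/-- A sparsity pattern on `n ≥ 1` states and one input with an edge from the input node
to state node `0`, a self-loop at state node `0`, and an edge from state node `0` to
every state node, is structurally averaged controllable. -/
theorem star_pattern_structurallyAveragedControllable
    (n : ℕ) [NeZero n]
    (edgeA : Fin n → Fin n → Prop) (edgeB : Fin n → Fin 1 → Prop)
    (hB : edgeB 0 0) (hA0 : edgeA 0 0) (hAi : ∀ i : Fin n, edgeA i 0) :
    StructurallyAveragedControllable edgeA edgeB := by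
  refine ⟨Amat n, Bmat n, ?_, ?_, ?_, ?_, ?_⟩
  · exact continuous_pi fun i => continuous_pi fun j => by
      by_cases h : j = 0
      · simpa [Amat, h] using (continuous_pow ((i : ℕ) + 1))
      · simpa [Amat, h] using continuous_const
  · exact continuous_const
  · intro σ _ i j hij
    by_cases h : j = 0
    · exact absurd (h ▸ hAi i) hij
    · simp [Amat, h]
  · intro σ _ i l hil
    have hl : l = 0 := Subsingleton.elim _ _
    by_cases h : i = 0
    · exact absurd (h ▸ hl ▸ hB) hil
    · simp [Bmat, h]
  · -- the span condition
    by_contra hspan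
    set p := Submodule.span ℝ {c : Fin n → ℝ | ∃ (k : ℕ) (l : Fin 1),
      c = fun i => ∫ σ in (0 : ℝ)..1, ((Amat n σ) ^ k * Bmat n σ) i l} with hp
    -- get a nonzero linear functional vanishing on p
    obtain ⟨x, -, hxp⟩ := SetLike.exists_of_lt (lt_top_iff_ne_top.mpr (hp ▸ hspan) :
      p < (⊤ : Submodule ℝ (Fin n → ℝ)))
    have hx0 : p.mkQ x ≠ 0 := by
      simpa [Submodule.Quotient.mk_eq_zero] using hxp
    obtain ⟨ψ, hψ⟩ : ∃ ψ : Module.Dual ℝ ((Fin n → ℝ) ⧸ p), ψ (p.mkQ x) ≠ 0 := by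
      by_contra h
      push_neg at h
      exact hx0 ((Module.forall_dual_apply_eq_zero_iff ℝ _).mp h)
    set φ : (Fin n → ℝ) →ₗ[ℝ] ℝ := ψ.comp p.mkQ with hφ
    have hker : ∀ c ∈ p, φ c = 0 := by
      intro c hc
      have : p.mkQ c = 0 := (Submodule.Quotient.mk_eq_zero p).mpr hc
      simp [hφ, this]
    set w : Fin n → ℝ := fun i => φ (fun j => if i = j then 1 else 0) with hw
    -- φ kills each column, giving moment conditions
    have hmom : ∀ k : ℕ, ∑ i : Fin n, (1 / ((i : ℕ) + k + 2)) * w i = 0 := by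
      intro k
      have hmem : (fun i : Fin n => 1 / ((i : ℕ) + k + 2) : Fin n → ℝ) ∈ p := by
        rw [hp]
        apply Submodule.subset_span
        exact ⟨k + 1, 0, (col_eq n k).symm⟩
      have := hker _ hmem
      rwa [LinearMap.pi_apply_eq_sum_univ φ] at this
    -- the polynomial with coefficients w
    set P : Polynomial ℝ := ∑ i : Fin n, Polynomial.C (w i) * Polynomial.X ^ ((i : ℕ) + 1)
      with hP
    have hPeval : ∀ σ : ℝ, P.eval σ = ∑ i : Fin n, w i * σ ^ ((i : ℕ) + 1) := by
      intro σ; simp [hP, Polynomial.eval_finset_sum]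
    -- all moments of P vanish
    have hPmom : ∀ k : ℕ, ∫ σ in (0 : ℝ)..1, σ ^ k * P.eval σ = 0 := by
      intro k
      have : ∀ σ : ℝ, σ ^ k * P.eval σ = ∑ i : Fin n, w i * σ ^ ((i : ℕ) + 1 + k) := by
        intro σ
        rw [hPeval, Finset.mul_sum]
        congr 1; funext i; ring
      simp only [this]
      rw [intervalIntegral.integral_finset_sum (fun i _ =>
        ((by fun_prop : Continuous fun σ : ℝ => w i * σ ^ ((i : ℕ) + 1 + k)).intervalIntegrable 0 1))]
      have : ∀ i : Fin n, ∫ σ in (0 : ℝ)..1, w i * σ ^ ((i : ℕ) + 1 + k) =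
          (1 / ((i : ℕ) + k + 2)) * w i := by
        intro i
        rw [intervalIntegral.integral_const_mul, integral_pow]
        push_cast
        ring
      simp only [this]
      exact hmom k
    -- hence the integral of P² vanishes
    have hP2 : ∫ σ in (0 : ℝ)..1, (P.eval σ) ^ 2 = 0 := by
      have h1 : ∀ σ : ℝ, (P.eval σ) ^ 2 = ∑ i : Fin n, w i * (σ ^ ((i : ℕ) + 1) * P.eval σ) := by
        intro σ
        rw [sq, hPeval, Finset.sum_mul]
        congr 1; funext i; ring
      simp only [h1]
      rw [intervalIntegral.integral_finset_sum (fun i _ =>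
        ((by fun_prop : Continuous fun σ : ℝ => w i * (σ ^ ((i : ℕ) + 1) * P.eval σ)).intervalIntegrable
          0 1))]
      have : ∀ i : Fin n, ∫ σ in (0 : ℝ)..1, w i * (σ ^ ((i : ℕ) + 1) * P.eval σ) = 0 := by
        intro i
        rw [intervalIntegral.integral_const_mul, hPmom ((i : ℕ) + 1), mul_zero]
      simp only [this, Finset.sum_const_zero]
    -- P is the zero polynomial is impossible since w ≠ 0... first show P ≠ 0
    have hφne : φ ≠ 0 := by
      intro h
      apply hψ
      have := LinearMap.congr_fun h x
      simpa [hφ] using this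
    obtain ⟨i₀, hi₀⟩ : ∃ i, w i ≠ 0 := by
      by_contra h
      push_neg at h
      apply hφne
      apply LinearMap.ext
      intro y
      rw [LinearMap.pi_apply_eq_sum_univ φ y]
      have h' : ∀ i : Fin n, φ (fun j => if i = j then 1 else 0) = 0 := h
      simp [h']
    have hPne : P ≠ 0 := by
      intro h
      apply hi₀
      have := congrArg (fun q => Polynomial.coeff q ((i₀ : ℕ) + 1)) h
      simp only [hP, Polynomial.finset_sum_coeff, Polynomial.coeff_C_mul,
        Polynomial.coeff_X_pow, Polynomial.coeff_zero] at this
      rwa [Finset.sum_eq_single i₀ (fun i _ hne => by simp [Fin.val_eq_val, Ne.symm hne])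
        (fun h => absurd (Finset.mem_univ i₀) h), if_pos rfl, mul_one] at this
    -- derive contradiction from hP2
    have hint : MeasureTheory.IntegrableOn (fun σ => (P.eval σ) ^ 2) (Set.Ioc (0:ℝ) 1) := by
      rw [← intervalIntegrable_iff_integrableOn_Ioc_of_le (by norm_num)]
      exact (P.continuous.pow 2).intervalIntegrable 0 1
    have hae : (fun σ => (P.eval σ) ^ 2) =ᵐ[MeasureTheory.volume.restrict (Set.Ioc (0:ℝ) 1)] 0 := by
      rw [← MeasureTheory.integral_eq_zero_iff_of_nonneg (fun σ => sq_nonneg _) hint]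
      rw [← intervalIntegral.integral_of_le (by norm_num : (0:ℝ) ≤ 1)]
      exact hP2
    have hnull : MeasureTheory.volume ({σ : ℝ | (P.eval σ) ^ 2 ≠ 0} ∩ Set.Ioc 0 1) = 0 := by
      have := MeasureTheory.ae_iff.mp hae
      rwa [MeasureTheory.Measure.restrict_apply₀'
        (measurableSet_Ioc).nullMeasurableSet] at this
    have hsub : Set.Ioc (0:ℝ) 1 ⊆
        ({σ : ℝ | (P.eval σ) ^ 2 ≠ 0} ∩ Set.Ioc 0 1) ∪ {σ : ℝ | P.IsRoot σ} := by
      intro σ hσ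
      by_cases h : P.eval σ = 0
      · exact Or.inr h
      · exact Or.inl ⟨by simp [pow_eq_zero_iff, h], hσ⟩
    have : MeasureTheory.volume (Set.Ioc (0:ℝ) 1) = 0 := by
      refine le_antisymm ?_ zero_le
      calc MeasureTheory.volume (Set.Ioc (0:ℝ) 1)
          ≤ MeasureTheory.volume (({σ : ℝ | (P.eval σ) ^ 2 ≠ 0} ∩ Set.Ioc 0 1) ∪
              {σ : ℝ | P.IsRoot σ}) := MeasureTheory.measure_mono hsub
        _ ≤ MeasureTheory.volume ({σ : ℝ | (P.eval σ) ^ 2 ≠ 0} ∩ Set.Ioc 0 1) +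
              MeasureTheory.volume {σ : ℝ | P.IsRoot σ} := MeasureTheory.measure_union_le _ _
        _ = 0 := by
            rw [hnull, (Polynomial.finite_setOf_isRoot hPne).measure_zero, add_zero]
    simp [Real.volume_Ioc] at this
end

section
/- Let n ≥ 1 and let (edgeA, edgeB) be a sparsity pattern on n states and 1 input with edgeB 0 0 and edgeA 0 0. Suppose there are functions d : Fin n → ℕ and p : Fin n → Fin n such that d i = 0 ↔ i = 0, and for every i ≠ 0: p i < i, d i = d (p i) + 1, and edgeA i (p i) holds (so the edges from p i to i form a directed spanning tree of the state subgraph rooted at node 0, with nodes labeled in order of nondecreasing depth d). Define M : Matrix (Fin n) (Fin n) ℝ by M i j = 1/(i + j + 1) if d i ≤ j, and M i j = 0 otherwise (indices read as natural numbers, 0-based; M is the sparse Hilbert matrix H_n(ℓ₁,…,ℓ_p) of the paper, with ℓ_j equal to the number of nodes i with d i < j). If M is invertible, then the pattern is structurally averaged controllable. -/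
open Matrix

/-- The sparse Hilbert matrix associated with the depth function `d` of a directed
spanning tree: `M i j = 1/(i + j + 1)` if `d i ≤ j` (0-based indices), and `0`
otherwise. -/
noncomputable def sparseHilbert (n : ℕ) (d : Fin n → ℕ) : Matrix (Fin n) (Fin n) ℝ :=
  Matrix.of fun i j : Fin n =>
    if d i ≤ (j : ℕ) then (1 : ℝ) / ((i : ℕ) + (j : ℕ) + 1) else 0

noncomputable def auxA (n : ℕ) [NeZero n] (p : Fin n → Fin n) (σ : ℝ) :
    Matrix (Fin n) (Fin n) ℝ :=
  Matrix.of fun i j =>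
    if i = (0 : Fin n) then (if j = (0 : Fin n) then σ else 0)
    else (if j = p i then σ ^ ((i : ℕ) - (p i : ℕ) + 1) else 0)

noncomputable def auxB (n : ℕ) [NeZero n] (_ : ℝ) : Matrix (Fin n) (Fin 1) ℝ :=
  Matrix.of fun i _ => if i = (0 : Fin n) then 1 else 0

theorem auxA_pow (n : ℕ) [NeZero n] (d : Fin n → ℕ) (p : Fin n → Fin n)
    (hd0 : ∀ i : Fin n, d i = 0 ↔ i = 0)
    (hp : ∀ i : Fin n, i ≠ 0 → p i < i ∧ d i = d (p i) + 1)
    (σ : ℝ) (k : ℕ) (i : Fin n) :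
    ((auxA n p σ) ^ k) i 0 = if d i ≤ k then σ ^ (k + (i : ℕ)) else 0 := by
  induction k generalizing i with
  | zero =>
    rcases eq_or_ne i 0 with rfl | hi
    · simp [Matrix.one_apply, (hd0 0).mpr rfl]
    · have : d i ≠ 0 := fun h => hi ((hd0 i).mp h)
      simp [Matrix.one_apply, hi, Nat.not_le.mpr (Nat.pos_of_ne_zero this)]
  | succ k ih =>
    rw [pow_succ', Matrix.mul_apply]
    rcases eq_or_ne i 0 with rfl | hi
    · have h1 : ∀ j : Fin n, auxA n p σ 0 j * ((auxA n p σ) ^ k) j 0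
          = if j = 0 then σ * ((auxA n p σ) ^ k) 0 0 else 0 := by
        intro j
        rcases eq_or_ne j 0 with rfl | hj
        · simp [auxA]
        · simp [auxA, hj]
      rw [Finset.sum_congr rfl fun j _ => h1 j, Finset.sum_ite_eq' Finset.univ 0,
        if_pos (Finset.mem_univ _), ih]
      have h0 : d 0 = 0 := (hd0 0).mpr rfl
      simp [h0, pow_succ']
    · have h1 : ∀ j : Fin n, auxA n p σ i j * ((auxA n p σ) ^ k) j 0
          = if j = p i then σ ^ ((i : ℕ) - (p i : ℕ) + 1) * ((auxA n p σ) ^ k) (p i) 0 else 0 := by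
        intro j
        rcases eq_or_ne j (p i) with rfl | hj
        · simp [auxA, hi]
        · simp [auxA, hi, hj]
      rw [Finset.sum_congr rfl fun j _ => h1 j, Finset.sum_ite_eq' Finset.univ (p i),
        if_pos (Finset.mem_univ _), ih]
      obtain ⟨hlt, hdi⟩ := hp i hi
      have hle : (p i : ℕ) ≤ (i : ℕ) := le_of_lt hlt
      by_cases hc : d (p i) ≤ k
      · rw [if_pos hc, if_pos (by omega), ← pow_add]
        congr 1
        omega
      · rw [if_neg hc, if_neg (by omega), mul_zero]

theorem mulB_entry (n : ℕ) [NeZero n] (d : Fin n → ℕ) (p : Fin n → Fin n)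
    (hd0 : ∀ i : Fin n, d i = 0 ↔ i = 0)
    (hp : ∀ i : Fin n, i ≠ 0 → p i < i ∧ d i = d (p i) + 1)
    (σ : ℝ) (k : ℕ) (i : Fin n) (l : Fin 1) :
    ((auxA n p σ) ^ k * auxB n σ) i l = if d i ≤ k then σ ^ (k + (i : ℕ)) else 0 := by
  rw [Matrix.mul_apply]
  have h1 : ∀ j : Fin n, ((auxA n p σ) ^ k) i j * auxB n σ j l
      = if j = 0 then ((auxA n p σ) ^ k) i 0 else 0 := by
    intro j
    rcases eq_or_ne j 0 with rfl | hj
    · simp [auxB]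
    · simp [auxB, hj]
  rw [Finset.sum_congr rfl fun j _ => h1 j, Finset.sum_ite_eq' Finset.univ 0,
    if_pos (Finset.mem_univ _), auxA_pow n d p hd0 hp]

theorem integral_entry (n : ℕ) [NeZero n] (d : Fin n → ℕ) (p : Fin n → Fin n)
    (hd0 : ∀ i : Fin n, d i = 0 ↔ i = 0)
    (hp : ∀ i : Fin n, i ≠ 0 → p i < i ∧ d i = d (p i) + 1)
    (k : ℕ) (i : Fin n) (l : Fin 1) :
    (∫ σ in (0:ℝ)..1, ((auxA n p σ) ^ k * auxB n σ) i l)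
      = if d i ≤ k then 1 / ((k : ℝ) + (i : ℕ) + 1) else 0 := by
  have h1 : ∀ σ : ℝ, ((auxA n p σ) ^ k * auxB n σ) i l
      = if d i ≤ k then σ ^ (k + (i : ℕ)) else 0 := fun σ => mulB_entry n d p hd0 hp σ k i l
  simp_rw [h1]
  by_cases hc : d i ≤ k
  · simp only [if_pos hc]
    rw [integral_pow]
    push_cast
    rw [one_pow, zero_pow (by positivity)]
    ring
  · simp [hc]

/-- Suppose a sparsity pattern on `n ≥ 1` states and one input has an edge from the
input node to state node `0` and a self-loop at `0`, and the state subgraph contains a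
directed spanning tree rooted at `0`, encoded by a depth function `d` and a parent map
`p` with nodes labeled in order of nondecreasing depth. If the associated sparse
Hilbert matrix is invertible, then the pattern is structurally averaged controllable. -/
theorem spanning_tree_structurallyAveragedControllable
    (n : ℕ) [NeZero n]
    (edgeA : Fin n → Fin n → Prop) (edgeB : Fin n → Fin 1 → Prop)
    (hB : edgeB 0 0) (hA0 : edgeA 0 0)
    (d : Fin n → ℕ) (p : Fin n → Fin n)
    (hd0 : ∀ i : Fin n, d i = 0 ↔ i = 0)
    (hp : ∀ i : Fin n, i ≠ 0 → p i < i ∧ d i = d (p i) + 1 ∧ edgeA i (p i))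
    (hM : Invertible (sparseHilbert n d)) :
    StructurallyAveragedControllable edgeA edgeB := by
  have hp' : ∀ i : Fin n, i ≠ 0 → p i < i ∧ d i = d (p i) + 1 :=
    fun i hi => ⟨(hp i hi).1, (hp i hi).2.1⟩
  refine ⟨auxA n p, auxB n, ?_, ?_, ?_, ?_, ?_⟩
  · apply continuous_pi; intro i; apply continuous_pi; intro j
    simp only [auxA, Matrix.of_apply]
    split_ifs <;> fun_prop
  · exact continuous_const
  · intro σ _ i j he
    rcases eq_or_ne i 0 with rfl | hi
    · rcases eq_or_ne j 0 with rfl | hj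
      · exact absurd hA0 he
      · simp [auxA, hj]
    · rcases eq_or_ne j (p i) with rfl | hj
      · exact absurd (hp i hi).2.2 he
      · simp [auxA, hi, hj]
  · intro σ _ i l he
    rcases eq_or_ne i 0 with rfl | hi
    · exact absurd (by exact Fin.fin_one_eq_zero l ▸ hB) he
    · simp [auxB, hi]
  · set M := sparseHilbert n d with hMdef
    rw [eq_top_iff]
    intro v _
    set w : Fin n → ℝ := (⅟M).mulVec v with hw
    have hv : v = M.mulVec w := by
      rw [hw, Matrix.mulVec_mulVec, mul_invOf_self, Matrix.one_mulVec]
    have hcol : ∀ j : Fin n, (fun i => M i j) ∈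
        {c : Fin n → ℝ | ∃ (k : ℕ) (l : Fin 1),
          c = fun i => ∫ σ in (0 : ℝ)..1, ((auxA n p σ) ^ k * auxB n σ) i l} := by
      intro j
      refine ⟨(j : ℕ), 0, ?_⟩
      funext i
      rw [integral_entry n d p hd0 hp' (j : ℕ) i 0]
      simp only [hMdef, sparseHilbert, Matrix.of_apply]
      by_cases hc : d i ≤ (j : ℕ)
      · rw [if_pos hc, if_pos hc]
        ring_nf
      · rw [if_neg hc, if_neg hc]
    have hveq : v = ∑ j : Fin n, w j • (fun i => M i j) := by
      funext i
      rw [hv]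
      simp only [Matrix.mulVec, dotProduct, Finset.sum_apply, Pi.smul_apply,
        smul_eq_mul]
      exact Finset.sum_congr rfl fun j _ => mul_comm _ _
    rw [hveq]
    exact Submodule.sum_mem _ fun j _ =>
      Submodule.smul_mem _ _ (Submodule.subset_span (hcol j))
end

section
/- Let n ≥ 1 and let d : Fin n → ℕ and p : Fin n → Fin n satisfy d i = 0 ↔ i = 0 and, for every i ≠ 0, p i < i and d i = d (p i) + 1. For σ ∈ ℝ define A(σ) : Matrix (Fin n) (Fin n) ℝ by A(σ) 0 0 = σ, A(σ) i (p i) = σ^(i − p i + 1) for each i ≠ 0 (indices read as natural numbers), and all other entries 0; let b : Fin n → ℝ be the standard basis vector e₀. Then for every σ ∈ ℝ, every k ∈ ℕ and every i ∈ Fin n, ((A(σ))^k *ᵥ b) i = σ^(i + k) if d i ≤ k, and ((A(σ))^k *ᵥ b) i = 0 otherwise. Consequently, ∫ σ in (0:ℝ)..1, ((A(σ))^k *ᵥ b) i equals 1/(i + k + 1) if d i ≤ k, and 0 otherwise. -/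
open Matrix

/-- The matrix assigned to a directed spanning tree rooted at node `0` with parent map
`p`: entry `(0,0)` equals `σ`, entry `(i, p i)` equals `σ ^ (i - p i + 1)` for `i ≠ 0`,
and all other entries vanish. -/
noncomputable def treeMatrix (n : ℕ) [NeZero n] (p : Fin n → Fin n) (σ : ℝ) :
    Matrix (Fin n) (Fin n) ℝ :=
  Matrix.of fun i j : Fin n =>
    if i = 0 then (if j = 0 then σ else 0)
    else (if j = p i then σ ^ ((i : ℕ) - (p i : ℕ) + 1) else 0)


lemma key (n : ℕ) [NeZero n] (d : Fin n → ℕ) (p : Fin n → Fin n)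
    (hd0 : ∀ i : Fin n, d i = 0 ↔ i = 0)
    (hp : ∀ i : Fin n, i ≠ 0 → p i < i ∧ d i = d (p i) + 1) :
    ∀ (k : ℕ) (σ : ℝ) (i : Fin n),
      ((treeMatrix n p σ ^ k) *ᵥ Pi.single (0 : Fin n) (1 : ℝ)) i =
        (if d i ≤ k then σ ^ ((i : ℕ) + k) else 0) := by
  intro k
  induction k with
  | zero =>
    intro σ i
    simp only [pow_zero, one_mulVec, Nat.le_zero, hd0]
    by_cases h : i = 0
    · subst h; simp
    · simp [Pi.single_eq_of_ne h, h]
  | succ k ih =>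
    intro σ i
    rw [pow_succ', ← mulVec_mulVec]
    set v := treeMatrix n p σ ^ k *ᵥ Pi.single (0 : Fin n) (1 : ℝ) with hv
    simp only [mulVec, dotProduct, treeMatrix, Matrix.of_apply]
    by_cases h : i = 0
    · subst h
      rw [Finset.sum_eq_single (0 : Fin n)]
      · rw [if_pos rfl, if_pos rfl, hv, ih]
        have hd : d 0 = 0 := (hd0 0).mpr rfl
        simp [hd, pow_succ, mul_comm]
      · intro b _ hb; simp [hb]
      · simp
    · rw [Finset.sum_eq_single (p i)]
      · rw [if_neg h, if_pos rfl, hv, ih]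
        obtain ⟨hlt, hdi⟩ := hp i h
        rw [hdi]
        by_cases hc : d (p i) ≤ k
        · rw [if_pos hc, if_pos (by omega), ← pow_add]
          congr 1
          have := Fin.lt_iff_val_lt_val.mp hlt
          omega
        · rw [if_neg hc, if_neg (by omega), mul_zero]
      · intro b _ hb; simp [h, hb]
      · simp

/-- For a directed spanning tree rooted at `0` with depth function `d` and parent map
`p` (parents preceding children), with `A(σ)` the associated tree matrix and `b = e₀`,
the entries of `A(σ)^k *ᵥ b` are `σ ^ (i + k)` when `d i ≤ k` and `0` otherwise; and
hence `∫₀¹ (A(σ)^k *ᵥ b) i dσ` equals `1/(i + k + 1)` when `d i ≤ k` and `0`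
otherwise. -/
theorem treeMatrix_pow_mulVec_single
    (n : ℕ) [NeZero n] (d : Fin n → ℕ) (p : Fin n → Fin n)
    (hd0 : ∀ i : Fin n, d i = 0 ↔ i = 0)
    (hp : ∀ i : Fin n, i ≠ 0 → p i < i ∧ d i = d (p i) + 1) :
    ∀ (σ : ℝ) (k : ℕ) (i : Fin n),
      ((treeMatrix n p σ ^ k) *ᵥ Pi.single (0 : Fin n) (1 : ℝ)) i =
        (if d i ≤ k then σ ^ ((i : ℕ) + k) else 0) ∧
      (∫ σ in (0 : ℝ)..1, ((treeMatrix n p σ ^ k) *ᵥ Pi.single (0 : Fin n) (1 : ℝ)) i) =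
        (if d i ≤ k then (1 : ℝ) / ((i : ℕ) + k + 1) else 0) := by
  intro σ k i
  refine ⟨key n d p hd0 hp k σ i, ?_⟩
  have : ∀ σ : ℝ, ((treeMatrix n p σ ^ k) *ᵥ Pi.single (0 : Fin n) (1 : ℝ)) i =
      (if d i ≤ k then σ ^ ((i : ℕ) + k) else 0) := fun σ => key n d p hd0 hp k σ i
  simp only [this]
  by_cases h : d i ≤ k
  · simp only [if_pos h]
    rw [integral_pow]
    push_cast
    ring
  · simp [h]
end

section
/- For every n ≥ 2 and every integer ℓ ≥ 1, the matrix H_n − u^(ℓ) e₁ᵀ (the n×n Hilbert matrix with the entries in its first column in rows ℓ+1,…,n replaced by 0) is invertible. -/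
open Matrix

/-- The `n × n` Hilbert matrix: with `0`-based indices, entry `(i, j)` is
`1 / (i + j + 1)` (i.e. `1/(i + j - 1)` with `1`-based indices). -/
noncomputable def hilbertMatrix (n : ℕ) : Matrix (Fin n) (Fin n) ℝ :=
  Matrix.of fun i j : Fin n => (1 : ℝ) / ((i : ℕ) + (j : ℕ) + 1)

/-- The rank-one matrix `u^(ℓ) e₁ᵀ`: its first column (column `0`) has entries
`u^(ℓ)_i = 0` for `i < ℓ` (rows `1, …, ℓ` in `1`-based indexing) and `1/(i+1)` for
`i ≥ ℓ`, and all other columns vanish. -/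
noncomputable def uMatrix (n ℓ : ℕ) : Matrix (Fin n) (Fin n) ℝ :=
  Matrix.of fun i j : Fin n =>
    if (j : ℕ) = 0 then (if (i : ℕ) < ℓ then 0 else (1 : ℝ) / ((i : ℕ) + 1)) else 0

namespace HilbertAux

open Finset Polynomial MeasureTheory intervalIntegral

/-- `t_j = C(n-1,j) * C(n+j,j)` as a real number. -/
noncomputable def tseq (n j : ℕ) : ℝ := ((n-1).choose j : ℝ) * ((n+j).choose j : ℝ)

/-- The explicit first column of the inverse Hilbert matrix. -/
noncomputable def wseq (n j : ℕ) : ℝ := (-1)^j * (j+1) * (tseq n j + tseq n (j+1))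

lemma tseq_n (n : ℕ) (hn : 1 ≤ n) : tseq n n = 0 := by
  unfold tseq
  rw [Nat.choose_eq_zero_of_lt (by omega)]
  simp

lemma tail_sum (n : ℕ) (hn : 1 ≤ n) :
    ∀ c m, m + c = n → ∑ i ∈ range c, wseq n (m+i) / (m+i+1) = (-1)^m * tseq n m := by
  intro c
  induction c with
  | zero =>
    intro m hm
    simp only [range_zero, sum_empty]
    rw [show m = n by omega, tseq_n n hn]
    ring
  | succ c ih =>
    intro m hm
    rw [Finset.sum_range_succ']
    have h1 : ∑ k ∈ range c, wseq n (m + (k+1)) / ((m:ℝ) + (↑(k+1):ℝ) + 1)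
        = ∑ i ∈ range c, wseq n ((m+1) + i) / ((↑(m+1):ℝ) + i + 1) := by
      apply Finset.sum_congr rfl
      intro i _
      push_cast
      ring_nf
    rw [h1, ih (m+1) (by omega)]
    unfold wseq
    have hm1 : ((m:ℝ) + 0 + 1) ≠ 0 := by positivity
    field_simp
    ring

lemma key_identity (n j : ℕ) (hj : j < n) :
    ((j:ℝ)+1) * (tseq n j + tseq n (j+1)) * (j.factorial : ℝ) * ((n-1-j).factorial : ℝ)
        * ((j+1).factorial : ℝ)
      = n * ((n+j).factorial : ℝ) := by
  obtain ⟨r, rfl⟩ : ∃ r, n = j + 1 + r := ⟨n - (j+1), by omega⟩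
  unfold tseq
  rcases r with _ | s
  · -- n = j+1
    simp only [Nat.add_zero]
    have h0 : (j + 1 - 1) = j := by omega
    rw [h0]
    rw [show j - j = 0 by omega]
    rw [Nat.choose_eq_zero_of_lt (by omega : j < j + 1)]
    rw [Nat.choose_self]
    have hc : ((j + 1 + j).choose j) * j.factorial * (j+1).factorial = (j+1+j).factorial := by
      have := Nat.choose_mul_factorial_mul_factorial (show j ≤ j+1+j by omega)
      have he : j + 1 + j - j = j + 1 := by omega
      rwa [he] at this
    have hcR : (((j + 1 + j).choose j : ℝ)) * (j.factorial : ℝ) * ((j+1).factorial : ℝ)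
        = ((j+1+j).factorial : ℝ) := by exact_mod_cast hc
    push_cast
    rw [Nat.factorial_zero]
    push_cast
    linear_combination ((j:ℝ)+1) * hcR
  · -- n = j + s + 2
    have h0 : (j + 1 + (s+1) - 1) = j + s + 1 := by omega
    rw [h0]
    rw [show j + s + 1 - j = s + 1 by omega]
    have e1 : ((j+s+1).choose j) * j.factorial * (s+1).factorial = (j+s+1).factorial := by
      have := Nat.choose_mul_factorial_mul_factorial (show j ≤ j+s+1 by omega)
      have he : j + s + 1 - j = s + 1 := by omega
      rwa [he] at this
    have e2 : ((j+1+(s+1)+j).choose j) * j.factorial * (j+s+2).factorial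
        = (j+1+(s+1)+j).factorial := by
      have := Nat.choose_mul_factorial_mul_factorial (show j ≤ j+1+(s+1)+j by omega)
      have he : j + 1 + (s+1) + j - j = j + s + 2 := by omega
      rwa [he] at this
    have e3 : ((j+s+1).choose (j+1)) * (j+1).factorial * s.factorial = (j+s+1).factorial := by
      have := Nat.choose_mul_factorial_mul_factorial (show j+1 ≤ j+s+1 by omega)
      have he : j + s + 1 - (j+1) = s := by omega
      rwa [he] at this
    have e4 : ((j+1+(s+1)+(j+1)).choose (j+1)) * (j+1).factorial * (j+s+2).factorial
        = (j+1+(s+1)+(j+1)).factorial := by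
      have := Nat.choose_mul_factorial_mul_factorial (show j+1 ≤ j+1+(s+1)+(j+1) by omega)
      have he : j+1+(s+1)+(j+1) - (j+1) = j + s + 2 := by omega
      rwa [he] at this
    have f1 : (((j+s+1).choose j : ℝ)) * (j.factorial:ℝ) * ((s+1).factorial:ℝ)
        = ((j+s+1).factorial:ℝ) := by exact_mod_cast e1
    have f2 : (((j+1+(s+1)+j).choose j : ℝ)) * (j.factorial:ℝ) * ((j+s+2).factorial:ℝ)
        = ((j+1+(s+1)+j).factorial:ℝ) := by exact_mod_cast e2
    have f3 : (((j+s+1).choose (j+1) : ℝ)) * ((j+1).factorial:ℝ) * (s.factorial:ℝ)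
        = ((j+s+1).factorial:ℝ) := by exact_mod_cast e3
    have f4 : (((j+1+(s+1)+(j+1)).choose (j+1) : ℝ)) * ((j+1).factorial:ℝ) * ((j+s+2).factorial:ℝ)
        = ((j+1+(s+1)+(j+1)).factorial:ℝ) := by exact_mod_cast e4
    have g1 : ((j+1).factorial : ℝ) = (j+1) * j.factorial := by
      exact_mod_cast Nat.factorial_succ j
    have g2 : ((s+1).factorial : ℝ) = (s+1) * s.factorial := by
      exact_mod_cast Nat.factorial_succ s
    have g3 : ((j+1+(s+1)+(j+1)).factorial : ℝ)
        = (2*j+s+3) * ((j+1+(s+1)+j).factorial : ℝ) := by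
      have : (j+1+(s+1)+(j+1)) = (j+1+(s+1)+j) + 1 := by omega
      rw [this, Nat.factorial_succ]
      push_cast; ring
    have g4 : ((j+s+2).factorial : ℝ) = (j+s+2) * ((j+s+1).factorial : ℝ) := by
      have : (j+s+2) = (j+s+1)+1 := by omega
      rw [this, Nat.factorial_succ]; push_cast; ring
    have hA : ((j+s+1).factorial:ℝ) ≠ 0 := by positivity
    have hB : (((j+1+(s+1)+j)).factorial:ℝ) ≠ 0 := by positivity
    have hC : ((j.factorial):ℝ) ≠ 0 := by positivity
    have hD : ((s.factorial):ℝ) ≠ 0 := by positivity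
    have c1 : (((j+s+1).choose j : ℝ)) = ((j+s+1).factorial:ℝ) / ((j.factorial:ℝ) * ((s+1) * s.factorial)) := by
      rw [← g2]; field_simp at f1 ⊢; linarith [f1]
    have c2 : (((j+1+(s+1)+j).choose j : ℝ))
        = ((j+1+(s+1)+j).factorial:ℝ) / ((j.factorial:ℝ) * ((j+s+2) * ((j+s+1).factorial:ℝ))) := by
      rw [← g4]; field_simp at f2 ⊢; linarith [f2]
    have c3 : (((j+s+1).choose (j+1) : ℝ))
        = ((j+s+1).factorial:ℝ) / (((j+1) * (j.factorial:ℝ)) * (s.factorial:ℝ)) := by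
      rw [← g1]; field_simp at f3 ⊢; linarith [f3]
    have c4 : (((j+1+(s+1)+(j+1)).choose (j+1) : ℝ))
        = ((2*j+s+3) * ((j+1+(s+1)+j).factorial : ℝ)) / (((j+1) * (j.factorial:ℝ)) * ((j+s+2) * ((j+s+1).factorial:ℝ))) := by
      rw [← g1, ← g4, ← g3]; field_simp at f4 ⊢; linarith [f4]
    rw [c1, c2, c3, c4, g1, g2]
    push_cast
    field_simp
    ring

lemma prod_shift (j : ℕ) : ∀ m, ((j+1).factorial : ℝ) * ∏ k ∈ range m, ((j:ℝ) + 2 + k)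
    = ((j+1+m).factorial : ℝ)
  | 0 => by simp
  | (m+1) => by
    rw [Finset.prod_range_succ, ← mul_assoc, prod_shift j m,
      show j+1+(m+1) = (j+1+m)+1 by omega, Nat.factorial_succ]
    push_cast; ring

lemma prod_desc : ∀ j : ℕ, ∏ k ∈ range j, ((j:ℝ) - k) = (j.factorial : ℝ)
  | 0 => by simp
  | (j+1) => by
    rw [Finset.prod_range_succ']
    push_cast
    rw [Finset.prod_congr rfl (fun k hk => by ring_nf :
      ∀ k ∈ range j, ((j:ℝ) + 1 - ((k:ℝ)+1)) = (j:ℝ) - k)]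
    rw [prod_desc j, Nat.factorial_succ]
    push_cast; ring

lemma prod_below (j : ℕ) : ∏ k ∈ range j, ((k:ℝ) - j) = (-1)^j * (j.factorial : ℝ) := by
  have : ∀ k ∈ range j, ((k:ℝ) - j) = (-1) * ((j:ℝ) - k) := by intro k _; ring
  rw [Finset.prod_congr rfl this, Finset.prod_mul_distrib, Finset.prod_const, prod_desc j]
  simp

lemma prod_above (j n : ℕ) (h : j < n) :
    ∏ k ∈ Ico (j+1) n, ((k:ℝ) - j) = ((n-1-j).factorial : ℝ) := by
  rw [Finset.prod_Ico_eq_prod_range]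
  have : ∀ k ∈ range (n - (j+1)), (((j+1+k:ℕ)):ℝ) - (j:ℕ) = ((k+1:ℕ):ℝ) := by
    intro k _; push_cast; ring
  rw [Finset.prod_congr rfl this, ← Nat.cast_prod,
    Finset.prod_range_add_one_eq_factorial, show n - (j+1) = n - 1 - j by omega]

lemma erase_prod (n : ℕ) (j : Fin n) :
    ∏ k ∈ (univ : Finset (Fin n)).erase j, (((k:ℕ):ℝ) - ((j:ℕ):ℝ))
      = (-1)^(j:ℕ) * (((j:ℕ).factorial : ℝ)) * ((n-1-(j:ℕ)).factorial : ℝ) := by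
  set g : ℕ → ℝ := fun k => if k = (j:ℕ) then 1 else (k:ℝ) - ((j:ℕ):ℝ) with hg
  have h1 : ∏ k ∈ (univ : Finset (Fin n)).erase j, (((k:ℕ):ℝ) - ((j:ℕ):ℝ))
      = ∏ k ∈ (univ : Finset (Fin n)).erase j, g (k:ℕ) := by
    apply Finset.prod_congr rfl
    intro k hk
    have hkj : (k:ℕ) ≠ (j:ℕ) := by
      have := (Finset.mem_erase.mp hk).1
      exact fun hc => this (Fin.ext hc)
    simp [hg, hkj]
  have h2 : ∏ k ∈ (univ : Finset (Fin n)).erase j, g (k:ℕ)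
      = ∏ k : Fin n, g (k:ℕ) := by
    apply Finset.prod_erase
    simp [hg]
  have h3 : ∏ k : Fin n, g (k:ℕ) = ∏ k ∈ range n, g k :=
    Fin.prod_univ_eq_prod_range (fun k => g k) n
  rw [h1, h2, h3]
  have hjn : (j:ℕ) + 1 ≤ n := j.isLt
  rw [← Finset.prod_range_mul_prod_Ico g hjn, Finset.prod_range_succ]
  have e0 : g (j:ℕ) = 1 := by simp [hg]
  have e1 : ∏ k ∈ range (j:ℕ), g k = ∏ k ∈ range (j:ℕ), ((k:ℝ) - ((j:ℕ):ℝ)) := by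
    apply Finset.prod_congr rfl; intro k hk
    have : k ≠ (j:ℕ) := by have := Finset.mem_range.mp hk; omega
    simp [hg, this]
  have e2 : ∏ k ∈ Ico ((j:ℕ)+1) n, g k = ∏ k ∈ Ico ((j:ℕ)+1) n, ((k:ℝ) - ((j:ℕ):ℝ)) := by
    apply Finset.prod_congr rfl; intro k hk
    have : k ≠ (j:ℕ) := by have := (Finset.mem_Ico.mp hk).1; omega
    simp [hg, this]
  rw [e0, e1, e2, prod_below, prod_above _ _ j.isLt]
  ring

lemma hilbert_w (n : ℕ) (hn : 1 ≤ n) (i : Fin n) :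
    ∑ j : Fin n, wseq n (j:ℕ) / (((i:ℕ):ℝ) + ((j:ℕ):ℝ) + 1)
      = if (i:ℕ) = 0 then 1 else 0 := by
  classical
  set c : ℝ := (-1)^(n-1) * (n:ℝ) with hc
  set p : ℝ[X] := C c * Lagrange.nodal (range (n-1)) (fun k => (k:ℝ)+1) with hp
  set v : Fin n → ℝ := fun j => -((j:ℕ):ℝ) - 1 with hv
  have hcne : c ≠ 0 := by
    simp only [hc]
    apply mul_ne_zero
    · exact pow_ne_zero _ (by norm_num)
    · exact_mod_cast Nat.one_le_iff_ne_zero.mp hn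
  have hinj : Set.InjOn v (univ : Finset (Fin n)) := by
    intro a _ b _ hab
    simp only [hv] at hab
    have : ((a:ℕ):ℝ) = ((b:ℕ):ℝ) := by linarith
    exact Fin.ext (by exact_mod_cast this)
  have hdeg : p.degree < ((univ : Finset (Fin n)).card : ℕ) := by
    rw [hp, Polynomial.degree_C_mul hcne, Lagrange.degree_nodal]
    simp only [card_range, card_univ, Fintype.card_fin]
    exact_mod_cast Nat.sub_lt (by omega) one_pos
  have hinterp := Lagrange.eq_interpolate (v := v) hinj hdeg
  have heval := congrArg (Polynomial.eval ((i:ℕ):ℝ)) hinterp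
  rw [Lagrange.interpolate_apply, Polynomial.eval_finset_sum] at heval
  have hterm : ∀ j : Fin n,
      Polynomial.eval ((i:ℕ):ℝ) (C (p.eval (v j)) * Lagrange.basis univ v j)
      = wseq n (j:ℕ) / (((i:ℕ):ℝ) + ((j:ℕ):ℝ) + 1)
          * ∏ k : Fin n, (((i:ℕ):ℝ) + ((k:ℕ):ℝ) + 1) := by
    intro j
    have hpvj : p.eval (v j) = (n:ℝ) * ∏ k ∈ range (n-1), (((j:ℕ):ℝ) + 2 + k) := by
      rw [hp, Polynomial.eval_mul, Polynomial.eval_C, Lagrange.eval_nodal]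
      have : ∀ k ∈ range (n-1), v j - ((k:ℝ)+1) = (-1) * (((j:ℕ):ℝ) + 2 + k) := by
        intro k _; simp only [hv]; ring
      rw [Finset.prod_congr rfl this, Finset.prod_mul_distrib, Finset.prod_const, card_range, hc]
      have hsq : ((-1:ℝ))^(n-1) * ((-1:ℝ))^(n-1) = 1 := by
        rw [← pow_add]
        exact Even.neg_one_pow ⟨n-1, by ring⟩
      calc (-1:ℝ)^(n-1) * n * ((-1:ℝ)^(n-1) * ∏ k ∈ range (n-1), (((j:ℕ):ℝ) + 2 + k))
          = ((-1:ℝ)^(n-1) * (-1:ℝ)^(n-1)) * (n * ∏ k ∈ range (n-1), (((j:ℕ):ℝ) + 2 + k)) := by ring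
        _ = _ := by rw [hsq]; ring
    rw [Polynomial.eval_mul, Polynomial.eval_C, Lagrange.basis, Polynomial.eval_prod]
    have hbd : ∀ k ∈ (univ : Finset (Fin n)).erase j,
        Polynomial.eval ((i:ℕ):ℝ) (Lagrange.basisDivisor (v j) (v k))
        = (((k:ℕ):ℝ) - ((j:ℕ):ℝ))⁻¹ * (((i:ℕ):ℝ) + ((k:ℕ):ℝ) + 1) := by
      intro k _
      simp only [Lagrange.basisDivisor, Polynomial.eval_mul, Polynomial.eval_C,
        Polynomial.eval_sub, Polynomial.eval_X, hv]
      congr 1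
      · congr 1; ring
      · ring
    rw [Finset.prod_congr rfl hbd, Finset.prod_mul_distrib, Finset.prod_inv_distrib]
    rw [erase_prod n j]
    have hprod_erase : (∏ k ∈ (univ : Finset (Fin n)).erase j, (((i:ℕ):ℝ) + ((k:ℕ):ℝ) + 1))
        * (((i:ℕ):ℝ) + ((j:ℕ):ℝ) + 1) = ∏ k : Fin n, (((i:ℕ):ℝ) + ((k:ℕ):ℝ) + 1) :=
      Finset.prod_erase_mul _ _ (mem_univ j)
    have hkey := key_identity n (j:ℕ) j.isLt
    have hps := prod_shift (j:ℕ) (n-1)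
    have hnj : (j:ℕ) + 1 + (n-1) = n + (j:ℕ) := by omega
    rw [hnj] at hps
    have hfac1 : ((j:ℕ).factorial : ℝ) ≠ 0 := by positivity
    have hfac2 : (((j:ℕ)+1).factorial : ℝ) ≠ 0 := by positivity
    have hfac3 : ((n-1-(j:ℕ)).factorial : ℝ) ≠ 0 := by positivity
    have hij : (((i:ℕ):ℝ) + ((j:ℕ):ℝ) + 1) ≠ 0 := by positivity
    rw [hpvj, ← hprod_erase]
    rw [wseq]
    have hsq2 : ((-1:ℝ))^(j:ℕ) * ((-1:ℝ))^(j:ℕ) = 1 := by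
      rw [← pow_add]; exact Even.neg_one_pow ⟨(j:ℕ), by ring⟩
    have hprod_val : ∏ k ∈ range (n-1), (((j:ℕ):ℝ) + 2 + k)
        = ((n+(j:ℕ)).factorial : ℝ) / (((j:ℕ)+1).factorial : ℝ) := by
      field_simp at hps ⊢
      linarith [hps]
    rw [hprod_val]
    field_simp
    set PP : ℝ := (∏ x ∈ (univ : Finset (Fin n)).erase j, (((i:ℕ):ℝ) + ((x:ℕ):ℝ) + 1))
        * (((i:ℕ):ℝ) + ((j:ℕ):ℝ) + 1) with hPP
    set K' : ℝ := (((j:ℕ):ℝ) + 1) * (tseq n (j:ℕ) + tseq n ((j:ℕ) + 1)) * (((j:ℕ)).factorial:ℝ)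
        * ((n - 1 - (j:ℕ)).factorial:ℝ) * (((j:ℕ) + 1).factorial:ℝ) with hK
    linear_combination (-1) * hkey + (-K') * hsq2
  rw [Finset.sum_congr rfl (fun j _ => hterm j)] at heval
  rw [← Finset.sum_mul] at heval
  have hQpos : (0:ℝ) < ∏ k : Fin n, (((i:ℕ):ℝ) + ((k:ℕ):ℝ) + 1) :=
    Finset.prod_pos (fun k _ => by positivity)
  have hQ : (∏ k : Fin n, (((i:ℕ):ℝ) + ((k:ℕ):ℝ) + 1)) ≠ 0 := ne_of_gt hQpos
  have hsum : ∑ j : Fin n, wseq n (j:ℕ) / (((i:ℕ):ℝ) + ((j:ℕ):ℝ) + 1)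
      = Polynomial.eval ((i:ℕ):ℝ) p / ∏ k : Fin n, (((i:ℕ):ℝ) + ((k:ℕ):ℝ) + 1) := by
    rw [heval]
    field_simp
  rw [hsum]
  by_cases hi0 : (i:ℕ) = 0
  · rw [if_pos hi0]
    rw [hi0]
    have hQn : ∏ k : Fin n, ((((0:ℕ)):ℝ) + ((k:ℕ):ℝ) + 1) = (n.factorial : ℝ) := by
      have h1 : ∀ k : Fin n, (((0:ℕ)):ℝ) + ((k:ℕ):ℝ) + 1 = (((k:ℕ)+1 : ℕ) : ℝ) := by
        intro k; push_cast; ring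
      rw [Finset.prod_congr rfl (fun k _ => h1 k)]
      rw [Fin.prod_univ_eq_prod_range (fun k => (((k+1 : ℕ)):ℝ)) n, ← Nat.cast_prod,
        Finset.prod_range_add_one_eq_factorial]
    have hpe : Polynomial.eval (((0:ℕ)):ℝ) p = (n.factorial : ℝ) := by
      rw [hp, Polynomial.eval_mul, Polynomial.eval_C, Lagrange.eval_nodal]
      have h1 : ∀ k ∈ range (n-1), ((((0:ℕ)):ℝ) - ((k:ℝ)+1)) = (-1) * (((k+1:ℕ)):ℝ) := by
        intro k _; push_cast; ring
      rw [Finset.prod_congr rfl h1, Finset.prod_mul_distrib, Finset.prod_const, card_range,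
        ← Nat.cast_prod, Finset.prod_range_add_one_eq_factorial, hc]
      have hsq : ((-1:ℝ))^(n-1) * ((-1:ℝ))^(n-1) = 1 := by
        rw [← pow_add]; exact Even.neg_one_pow ⟨n-1, by ring⟩
      have hnf : (n:ℝ) * ((n-1).factorial : ℝ) = (n.factorial : ℝ) := by
        have hh : n.factorial = n * (n-1).factorial := by
          conv_lhs => rw [show n = (n-1)+1 by omega]
          rw [Nat.factorial_succ, show (n-1)+1 = n by omega]
        exact_mod_cast hh.symm
      calc (-1:ℝ)^(n-1) * n * ((-1:ℝ)^(n-1) * ((n-1).factorial : ℝ))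
          = ((-1:ℝ)^(n-1) * (-1:ℝ)^(n-1)) * ((n:ℝ) * ((n-1).factorial : ℝ)) := by ring
        _ = (n.factorial : ℝ) := by rw [hsq, hnf]; ring
    rw [hQn, hpe, div_self (by positivity)]
  · rw [if_neg hi0]
    have hpe : Polynomial.eval ((i:ℕ):ℝ) p = 0 := by
      rw [hp, Polynomial.eval_mul, Polynomial.eval_C, Lagrange.eval_nodal]
      have hmem : (i:ℕ) - 1 ∈ range (n-1) := by
        rw [Finset.mem_range]
        have := i.isLt
        omega
      rw [Finset.prod_eq_zero hmem]
      · ring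
      · have h1 : (((i:ℕ)-1 : ℕ):ℝ) = ((i:ℕ):ℝ) - 1 := by
          rw [Nat.cast_sub (by omega)]
          norm_num
        rw [h1]
        ring
    rw [hpe, zero_div]

lemma hilbert_mulVec_eq_zero {n : ℕ} (x : Fin n → ℝ)
    (hx : (hilbertMatrix n) *ᵥ x = 0) : x = 0 := by
  classical
  by_contra hx0
  set P : Polynomial ℝ := ∑ j : Fin n, C (x j) * X^(j:ℕ) with hP
  have hPev : ∀ t : ℝ, P.eval t = ∑ j : Fin n, x j * t^(j:ℕ) := by
    intro t
    rw [hP, Polynomial.eval_finset_sum]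
    simp
  have hPne : P ≠ 0 := by
    obtain ⟨j, hj⟩ : ∃ j, x j ≠ 0 := by
      by_contra hall
      push_neg at hall
      exact hx0 (funext hall)
    intro hzero
    apply hj
    have hcoeff : P.coeff (j:ℕ) = x j := by
      rw [hP, Polynomial.finset_sum_coeff]
      rw [Finset.sum_eq_single j]
      · simp [Polynomial.coeff_C_mul, Polynomial.coeff_X_pow]
      · intro b _ hb
        have : (j:ℕ) ≠ (b:ℕ) := fun hc => hb (Fin.ext hc.symm)
        simp only [Polynomial.coeff_C_mul, Polynomial.coeff_X_pow]
        rw [if_neg this]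
        simp
      · simp
    rw [hzero] at hcoeff
    simp at hcoeff
    exact hcoeff.symm
  have hint_pow : ∀ m : ℕ, ∫ t in (0:ℝ)..1, t^m = 1/((m:ℝ)+1) := by
    intro m
    rw [integral_pow]
    norm_num
  have key1 : ∀ i : Fin n, ∫ t in (0:ℝ)..1, t^(i:ℕ) * P.eval t = 0 := by
    intro i
    have hintegrand : ∀ t : ℝ, t^(i:ℕ) * P.eval t = ∑ j : Fin n, x j * t^((i:ℕ)+(j:ℕ)) := by
      intro t
      rw [hPev t, Finset.mul_sum]
      apply Finset.sum_congr rfl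
      intro j _
      rw [pow_add]
      ring
    rw [intervalIntegral.integral_congr (fun t _ => hintegrand t)]
    rw [intervalIntegral.integral_finset_sum]
    · have : ∀ j : Fin n, (∫ t in (0:ℝ)..1, x j * t^((i:ℕ)+(j:ℕ)))
          = x j * (1/(((i:ℕ):ℝ)+((j:ℕ):ℝ)+1)) := by
        intro j
        rw [intervalIntegral.integral_const_mul, hint_pow]
        push_cast
        ring_nf
      rw [Finset.sum_congr rfl (fun j _ => this j)]
      have := congrFun hx i
      simp only [Matrix.mulVec, dotProduct, hilbertMatrix, Matrix.of_apply,
        Pi.zero_apply] at this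
      rw [← this]
      apply Finset.sum_congr rfl
      intro j _
      ring
    · intro j _
      apply Continuous.intervalIntegrable
      continuity
  have key2 : ∫ t in (0:ℝ)..1, (P.eval t)^2 = 0 := by
    have hintegrand : ∀ t : ℝ, (P.eval t)^2 = ∑ i : Fin n, x i * (t^(i:ℕ) * P.eval t) := by
      intro t
      rw [pow_two]
      nth_rewrite 1 [hPev t]
      rw [Finset.sum_mul]
      apply Finset.sum_congr rfl
      intro i _
      ring
    rw [intervalIntegral.integral_congr (fun t _ => hintegrand t)]
    rw [intervalIntegral.integral_finset_sum]
    · rw [Finset.sum_congr rfl (fun i (_ : i ∈ univ) => by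
        rw [intervalIntegral.integral_const_mul, key1 i, mul_zero])]
      simp
    · intro i _
      apply Continuous.intervalIntegrable
      have : Continuous (fun t : ℝ => P.eval t) := P.continuous_aeval
      continuity
  have hpos : 0 < ∫ t in (0:ℝ)..1, (P.eval t)^2 := by
    rw [intervalIntegral.integral_pos_iff_support_of_nonneg_ae]
    · refine ⟨by norm_num, ?_⟩
      have hroots : {t : ℝ | P.IsRoot t}.Finite := Polynomial.finite_setOf_isRoot hPne
      have hsub : Set.Ioc (0:ℝ) 1 \ {t : ℝ | P.IsRoot t}
          ⊆ (Function.support fun t => (P.eval t)^2) ∩ Set.Ioc 0 1 := by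
        intro t ht
        constructor
        · simp only [Function.mem_support]
          intro hc
          exact ht.2 (show P.IsRoot t from (pow_eq_zero_iff two_ne_zero).mp hc)
        · exact ht.1
      calc (0 : ENNReal) < 1 := by norm_num
        _ = volume (Set.Ioc (0:ℝ) 1 \ {t : ℝ | P.IsRoot t}) := by
            rw [measure_diff_null (hroots.measure_zero volume)]
            simp
        _ ≤ volume ((Function.support fun t => (P.eval t)^2) ∩ Set.Ioc 0 1) :=
            measure_mono hsub
    · filter_upwards with t
      positivity
    · apply Continuous.intervalIntegrable
      have : Continuous (fun t : ℝ => P.eval t) := P.continuous_aeval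
      continuity
  exact (ne_of_gt hpos) key2

end HilbertAux

/-- For every `n ≥ 2` and `ℓ ≥ 1`, the matrix `H_n - u^(ℓ) e₁ᵀ` (the Hilbert matrix
with the entries of its first column in rows `ℓ+1, …, n` replaced by `0`) is
invertible. -/
theorem hilbert_sub_u_invertible (n ℓ : ℕ) (hn : 2 ≤ n) (hℓ : 1 ≤ ℓ) :
    IsUnit (hilbertMatrix n - uMatrix n ℓ) := by
  classical
  open HilbertAux Finset in
  have hn1 : 1 ≤ n := by omega
  rw [Matrix.isUnit_iff_isUnit_det, isUnit_iff_ne_zero]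
  intro hdet
  obtain ⟨x, hx0, hxker⟩ := Matrix.exists_mulVec_eq_zero_iff.mpr hdet
  apply hx0
  -- H x = U x
  have hHU : (hilbertMatrix n) *ᵥ x = (uMatrix n ℓ) *ᵥ x := by
    have := hxker
    rw [Matrix.sub_mulVec] at this
    ext i
    have := congrFun this i
    simp only [Pi.sub_apply, Pi.zero_apply] at this
    linarith
  -- U x i = u_i * x 0
  have hzero : (0:ℕ) < n := by omega
  have hUx : ∀ i : Fin n, ((uMatrix n ℓ) *ᵥ x) i
      = (if (i:ℕ) < ℓ then 0 else 1/(((i:ℕ):ℝ)+1)) * x ⟨0, hzero⟩ := by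
    intro i
    simp only [Matrix.mulVec, dotProduct, uMatrix, Matrix.of_apply]
    rw [Finset.sum_eq_single (⟨0, hzero⟩ : Fin n)]
    · simp
    · intro b _ hb
      have : (b:ℕ) ≠ 0 := by
        intro hc
        exact hb (Fin.ext hc)
      rw [if_neg this, zero_mul]
    · simp
  set w : Fin n → ℝ := fun j => wseq n (j:ℕ) with hw
  -- the scalar S
  have hS1 : ∑ i : Fin n, w i * ((hilbertMatrix n) *ᵥ x) i = x ⟨0, hzero⟩ := by
    simp only [Matrix.mulVec, dotProduct, hilbertMatrix, Matrix.of_apply]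
    simp only [Finset.mul_sum]
    rw [Finset.sum_comm]
    have hrow : ∀ j : Fin n, ∑ i : Fin n, w i * (1/(((i:ℕ):ℝ)+((j:ℕ):ℝ)+1) * x j)
        = (if (j:ℕ) = 0 then 1 else 0) * x j := by
      intro j
      have hpre : ∀ i : Fin n, w i * (1 / (((i:ℕ):ℝ) + ((j:ℕ):ℝ) + 1) * x j)
          = (w i * (1/(((i:ℕ):ℝ)+((j:ℕ):ℝ)+1))) * x j := fun i => by ring
      rw [Finset.sum_congr rfl (fun i _ => hpre i), ← Finset.sum_mul]
      congr 1
      rw [← hilbert_w n hn1 j]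
      apply Finset.sum_congr rfl
      intro i _
      rw [hw]
      have h1 : ((i:ℕ):ℝ)+((j:ℕ):ℝ)+1 = ((j:ℕ):ℝ)+((i:ℕ):ℝ)+1 := by ring
      rw [h1]
      field_simp
    rw [Finset.sum_congr rfl (fun j _ => hrow j)]
    rw [Finset.sum_eq_single (⟨0, hzero⟩ : Fin n)]
    · simp
    · intro b _ hb
      have : (b:ℕ) ≠ 0 := fun hc => hb (Fin.ext hc)
      rw [if_neg this, zero_mul]
    · simp
  have hS2 : ∑ i : Fin n, w i * ((hilbertMatrix n) *ᵥ x) i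
      = ((-1)^(min ℓ n) * tseq n (min ℓ n)) * x ⟨0, hzero⟩ := by
    rw [Finset.sum_congr rfl (fun i _ => by rw [hHU, hUx i])]
    have : ∀ i : Fin n, w i * ((if (i:ℕ) < ℓ then 0 else 1/(((i:ℕ):ℝ)+1)) * x ⟨0, hzero⟩)
        = (if (i:ℕ) < ℓ then 0 else wseq n (i:ℕ)/(((i:ℕ):ℝ)+1)) * x ⟨0, hzero⟩ := by
      intro i
      by_cases hc : (i:ℕ) < ℓ
      · simp [hc]
      · rw [if_neg hc, if_neg hc, hw]
        field_simp
    rw [Finset.sum_congr rfl (fun i _ => this i), ← Finset.sum_mul]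
    congr 1
    -- evaluate the truncated sum
    have htrans : ∑ i : Fin n, (if (i:ℕ) < ℓ then (0:ℝ) else wseq n (i:ℕ)/(((i:ℕ):ℝ)+1))
        = ∑ i ∈ range n, (if i < ℓ then (0:ℝ) else wseq n i/((i:ℝ)+1)) :=
      Fin.sum_univ_eq_sum_range (fun i => if i < ℓ then (0:ℝ) else wseq n i/((i:ℝ)+1)) n
    rw [htrans]
    set m := min ℓ n with hm
    have hm_le : m ≤ n := min_le_right _ _
    have hsplit : ∑ i ∈ range n, (if i < ℓ then (0:ℝ) else wseq n i/((i:ℝ)+1))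
        = ∑ i ∈ Ico m n, (if i < ℓ then (0:ℝ) else wseq n i/((i:ℝ)+1)) := by
      rw [range_eq_Ico, ← Finset.sum_Ico_consecutive _ (Nat.zero_le m) hm_le]
      have : ∀ i ∈ Ico 0 m, (if i < ℓ then (0:ℝ) else wseq n i/((i:ℝ)+1)) = 0 := by
        intro i hi
        have := (Finset.mem_Ico.mp hi).2
        rw [if_pos (by omega)]
      rw [Finset.sum_congr rfl this]
      simp
    rw [hsplit]
    have hval : ∀ i ∈ Ico m n, (if i < ℓ then (0:ℝ) else wseq n i/((i:ℝ)+1))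
        = wseq n i/((i:ℝ)+1) := by
      intro i hi
      have h1 := Finset.mem_Ico.mp hi
      have : ¬ (i < ℓ) := by omega
      rw [if_neg this]
    rw [Finset.sum_congr rfl hval]
    rw [Finset.sum_Ico_eq_sum_range]
    have := tail_sum n hn1 (n - m) m (by omega)
    rw [← this]
    apply Finset.sum_congr rfl
    intro i _
    push_cast
    ring_nf
  -- combine
  have hx00 : x ⟨0, hzero⟩ = 0 := by
    have heq : x ⟨0, hzero⟩ * (1 - (-1)^(min ℓ n) * tseq n (min ℓ n)) = 0 := by
      rw [hS1] at hS2
      linarith [hS2]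
    rcases mul_eq_zero.mp heq with h | h
    · exact h
    · exfalso
      by_cases hln : ℓ < n
      · have hmeq : min ℓ n = ℓ := by omega
        rw [hmeq] at h
        have ht2 : (2:ℝ) ≤ tseq n ℓ := by
          unfold tseq
          have hc1 : 1 ≤ (n-1).choose ℓ := Nat.choose_pos (by omega)
          have hc2 : ℓ + 1 ≤ (n+ℓ).choose ℓ := by
            calc ℓ + 1 = (ℓ+1).choose ℓ := (Nat.choose_succ_self_right ℓ).symm
              _ ≤ (n+ℓ).choose ℓ := Nat.choose_le_choose ℓ (by omega)
          have h1 : (1:ℝ) ≤ ((n-1).choose ℓ : ℝ) := by exact_mod_cast hc1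
          have h2 : (2:ℝ) ≤ ((n+ℓ).choose ℓ : ℝ) := by
            have : 2 ≤ (n+ℓ).choose ℓ := by omega
            exact_mod_cast this
          nlinarith
        rcases Nat.even_or_odd ℓ with hpar | hpar
        · rw [Even.neg_one_pow hpar] at h
          nlinarith
        · rw [Odd.neg_one_pow hpar] at h
          nlinarith
      · have hmeq : min ℓ n = n := by omega
        rw [hmeq, tseq_n n hn1] at h
        norm_num at h
  -- now H x = 0
  have hHx0 : (hilbertMatrix n) *ᵥ x = 0 := by
    rw [hHU]
    ext i
    rw [hUx i, hx00, mul_zero]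
    simp
  exact hilbert_mulVec_eq_zero x hHx0
end

section
/- For every n ≥ 2 and every ℓ with 1 ≤ ℓ ≤ n−1, |Z(1,n)| ≤ |Z(ℓ,n)|; that is, the minimum of |Z(·,n)| over {1,…,n−1} is attained at ℓ = 1. -/
/-- `Z ℓ n = (−1)^ℓ (ℓ+1)² C(n, n−ℓ−1) C(n+ℓ, n−1)`, where the binomial coefficient
`C(n, n−ℓ−1)` is taken to be `0` when `ℓ ≥ n`. -/
def Z (ℓ n : ℕ) : ℤ :=
  (-1) ^ ℓ * ((ℓ : ℤ) + 1) ^ 2 *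
    (if ℓ + 1 ≤ n then (n.choose (n - ℓ - 1) : ℤ) else 0) *
    ((n + ℓ).choose (n - 1) : ℤ)

def gZ (n k : ℕ) : ℕ := k ^ 2 * n.choose k * (n + k - 1).choose (n - 1)

lemma gZ_ratio (n k : ℕ) (hn : 1 ≤ n) (hk : 1 ≤ k) (hkn : k ≤ n) :
    k ^ 2 * gZ n (k + 1) = (n ^ 2 - k ^ 2) * gZ n k := by
  obtain ⟨j, rfl⟩ : ∃ j, k = j + 1 := ⟨k - 1, by omega⟩
  obtain ⟨m, rfl⟩ : ∃ m, n = m + j + 1 := ⟨n - j - 1, by omega⟩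
  unfold gZ
  set n := m + j + 1 with hn'
  have A1 : n.choose (j + 2) * (j + 2) = n.choose (j + 1) * m := by
    have := Nat.choose_succ_right_eq n (j + 1)
    simpa [hn', show m + j + 1 - (j + 1) = m by omega] using this
  have h3 : (m + 2*j + 2).choose (m + j) = (m + 2*j + 2).choose (j + 2) := by
    rw [← Nat.choose_symm (show j + 2 ≤ m + 2*j + 2 by omega)]
    congr 1; omega
  have A2 : (m + 2*j + 2).choose (j + 2) * (j + 2)
      = (m + 2*j + 2).choose (j + 1) * (m + j + 1) := by
    have := Nat.choose_succ_right_eq (m + 2*j + 2) (j + 1)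
    simpa [show m + 2*j + 2 - (j + 1) = m + j + 1 by omega] using this
  have h5 : (m + 2*j + 2).choose (j + 1) = (m + 2*j + 2).choose (m + j + 1) := by
    rw [← Nat.choose_symm (show j + 1 ≤ m + 2*j + 2 by omega)]
    congr 1; omega
  have A3 : (m + 2*j + 2) * (m + 2*j + 1).choose (m + j)
      = (m + 2*j + 2).choose (m + j + 1) * (m + j + 1) := by
    have := Nat.add_one_mul_choose_eq (m + 2*j + 1) (m + j)
    simpa using this
  have e1 : n + (j + 1 + 1) - 1 = m + 2*j + 2 := by omega
  have e2 : n + (j + 1) - 1 = m + 2*j + 1 := by omega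
  have e3 : n - 1 = m + j := by omega
  have e4 : n ^ 2 - (j + 1) ^ 2 = m * (m + 2*j + 2) := by
    have : n ^ 2 = m * (m + 2*j + 2) + (j + 1) ^ 2 := by rw [hn']; ring
    omega
  rw [e1, e2, e3, e4, h3]
  calc (j + 1) ^ 2 * ((j + 1 + 1) ^ 2 * n.choose (j + 1 + 1) * (m + 2*j + 2).choose (j + 2))
      = (j + 1) ^ 2 * ((n.choose (j + 2) * (j + 2)) * ((m + 2*j + 2).choose (j + 2) * (j + 2))) := by
        ring
    _ = (j + 1) ^ 2 * ((n.choose (j + 1) * m) * ((m + 2*j + 2).choose (j + 1) * (m + j + 1))) := by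
        rw [A1, A2]
    _ = (j + 1) ^ 2 * ((n.choose (j + 1) * m) * ((m + 2*j + 2).choose (m + j + 1) * (m + j + 1))) := by
        rw [h5]
    _ = (j + 1) ^ 2 * ((n.choose (j + 1) * m) * ((m + 2*j + 2) * (m + 2*j + 1).choose (m + j))) := by
        rw [← A3]
    _ = m * (m + 2*j + 2) * ((j + 1) ^ 2 * n.choose (j + 1) * (m + 2*j + 1).choose (m + j)) := by
        ring

lemma gZ_mono_up (n k : ℕ) (hk : 1 ≤ k) (hkn : k ≤ n) (h : 2 * k ^ 2 ≤ n ^ 2) :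
    gZ n k ≤ gZ n (k + 1) := by
  have hr := gZ_ratio n k (by omega) hk hkn
  have h1 : k ^ 2 * gZ n k ≤ k ^ 2 * gZ n (k + 1) := by
    rw [hr]
    exact Nat.mul_le_mul_right _ (by omega)
  exact Nat.le_of_mul_le_mul_left h1 (by positivity)

lemma gZ_mono_down (n k : ℕ) (hk : 1 ≤ k) (hkn : k ≤ n) (h : n ^ 2 ≤ 2 * k ^ 2) :
    gZ n (k + 1) ≤ gZ n k := by
  have hr := gZ_ratio n k (by omega) hk hkn
  have h1 : k ^ 2 * gZ n (k + 1) ≤ k ^ 2 * gZ n k := by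
    rw [hr]
    exact Nat.mul_le_mul_right _ (by omega)
  exact Nat.le_of_mul_le_mul_left h1 (by positivity)

lemma gZ_up_chain (n : ℕ) (hn : 2 ≤ n) :
    ∀ d, 2 + d ≤ n → 2 * (1 + d) ^ 2 ≤ n ^ 2 → gZ n 2 ≤ gZ n (2 + d) := by
  intro d
  induction d with
  | zero => intro _ _; exact le_refl _
  | succ d ih =>
      intro h1 h2
      have hstep : 2 * (1 + d) ^ 2 ≤ n ^ 2 := by
        calc 2 * (1 + d) ^ 2 ≤ 2 * (1 + (d+1)) ^ 2 := by
              exact Nat.mul_le_mul_left _ (Nat.pow_le_pow_left (by omega) 2)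
          _ ≤ n ^ 2 := h2
      have h3 : gZ n 2 ≤ gZ n (2 + d) := ih (by omega) hstep
      have h4 : gZ n (2 + d) ≤ gZ n (2 + d + 1) := by
        apply gZ_mono_up n (2 + d) (by omega) (by omega)
        calc 2 * (2 + d) ^ 2 = 2 * (1 + (d + 1)) ^ 2 := by ring_nf
          _ ≤ n ^ 2 := h2
      calc gZ n 2 ≤ gZ n (2 + d) := h3
        _ ≤ gZ n (2 + d + 1) := h4
        _ = gZ n (2 + (d + 1)) := by ring_nf

lemma gZ_down_chain (n : ℕ) (hn : 2 ≤ n) :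
    ∀ m k, n - k = m → k ≤ n → n ^ 2 ≤ 2 * k ^ 2 → gZ n n ≤ gZ n k := by
  intro m
  induction m with
  | zero => intro k h1 h2 h3; have : k = n := by omega
            subst this; exact le_refl _
  | succ m ih =>
      intro k h1 h2 h3
      have hk1 : 1 ≤ k := by nlinarith
      have h4 : gZ n n ≤ gZ n (k + 1) := by
        apply ih (k + 1) (by omega) (by omega)
        calc n ^ 2 ≤ 2 * k ^ 2 := h3
          _ ≤ 2 * (k + 1) ^ 2 := by nlinarith
      have h5 : gZ n (k + 1) ≤ gZ n k := gZ_mono_down n k hk1 (by omega) h3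
      exact le_trans h4 h5

lemma gZ_two (n : ℕ) (hn : 2 ≤ n) : gZ n 2 = (n ^ 2 - 1) * n ^ 2 := by
  have hr := gZ_ratio n 1 (by omega) (by omega) (by omega)
  have h1 : gZ n 1 = n ^ 2 := by
    unfold gZ
    have : n.choose (n - 1) = n := by
      rw [Nat.choose_symm (show 1 ≤ n by omega), Nat.choose_one_right]
    rw [Nat.choose_one_right, show n + 1 - 1 = n by omega, this]
    ring
  simpa [h1] using hr

lemma gZ_n_ge (n : ℕ) (hn : 2 ≤ n) : gZ n 2 ≤ gZ n n := by
  rw [gZ_two n hn]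
  unfold gZ
  rw [Nat.choose_self]
  have e : n + n - 1 = 2 * n - 1 := by omega
  rw [e]
  have hmid : (2 * n - 1).choose 2 ≤ (2 * n - 1).choose (n - 1) := by
    have := Nat.choose_le_middle 2 (2 * n - 1)
    have e2 : (2 * n - 1) / 2 = n - 1 := by omega
    rwa [e2] at this
  have hch2 : n ^ 2 - 1 ≤ (2 * n - 1).choose 2 := by
    obtain ⟨m, rfl⟩ : ∃ m, n = m + 2 := ⟨n - 2, by omega⟩
    rw [Nat.choose_two_right]
    have e3 : 2 * (m + 2) - 1 = 2 * m + 3 := by omega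
    rw [e3]
    have e4 : (2 * m + 3) * (2 * m + 3 - 1) / 2 = (2 * m + 3) * (m + 1) := by
      rw [show 2 * m + 3 - 1 = 2 * (m + 1) by omega]
      rw [Nat.mul_div_assoc _ (by omega : (2:ℕ) ∣ 2 * (m + 1))]
      congr 1
      omega
    rw [e4]
    have : (m + 2) ^ 2 - 1 = m ^ 2 + 4 * m + 3 := by
      have : (m + 2) ^ 2 = m ^ 2 + 4 * m + 4 := by ring
      omega
    rw [this]
    nlinarith
  calc (n ^ 2 - 1) * n ^ 2 ≤ (2 * n - 1).choose (n - 1) * n ^ 2 :=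
        Nat.mul_le_mul_right _ (le_trans hch2 hmid)
    _ = n ^ 2 * 1 * (2 * n - 1).choose (n - 1) := by ring

lemma gZ_min (n k : ℕ) (hn : 2 ≤ n) (hk : 2 ≤ k) (hkn : k ≤ n) : gZ n 2 ≤ gZ n k := by
  by_cases h : 2 * (k - 1) ^ 2 ≤ n ^ 2
  · obtain ⟨d, rfl⟩ : ∃ d, k = 2 + d := ⟨k - 2, by omega⟩
    exact gZ_up_chain n hn d hkn (by simpa [show 2 + d - 1 = 1 + d by omega] using h)
  · push_neg at h
    have h2 : n ^ 2 ≤ 2 * k ^ 2 := by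
      have : (k - 1) ^ 2 ≤ k ^ 2 := Nat.pow_le_pow_left (by omega) 2
      omega
    exact le_trans (gZ_n_ge n hn) (gZ_down_chain n hn (n - k) k rfl hkn h2)

lemma abs_Z_eq (n ℓ : ℕ) (h : ℓ + 1 ≤ n) : |Z ℓ n| = (gZ n (ℓ + 1) : ℤ) := by
  unfold Z gZ
  rw [if_pos h]
  have h1 : n - ℓ - 1 = n - (ℓ + 1) := by omega
  rw [h1, Nat.choose_symm h]
  have h2 : n + (ℓ + 1) - 1 = n + ℓ := by omega
  rw [h2]
  rw [abs_mul, abs_mul, abs_mul, abs_pow, abs_neg, abs_one, one_pow, one_mul]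
  rw [abs_of_nonneg (by positivity : (0:ℤ) ≤ ((ℓ:ℤ) + 1) ^ 2),
      abs_of_nonneg (Int.natCast_nonneg _), abs_of_nonneg (Int.natCast_nonneg _)]
  push_cast
  ring

/-- For every `n ≥ 2` and every `ℓ` with `1 ≤ ℓ ≤ n − 1`, `|Z(1,n)| ≤ |Z(ℓ,n)|`:
the minimum of `|Z(·,n)|` over `{1, …, n−1}` is attained at `ℓ = 1`. -/
theorem abs_Z_one_min (n ℓ : ℕ) (hn : 2 ≤ n) (hℓ1 : 1 ≤ ℓ) (hℓ2 : ℓ ≤ n - 1) :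
    |Z 1 n| ≤ |Z ℓ n| := by
  rw [abs_Z_eq n 1 (by omega), abs_Z_eq n ℓ (by omega)]
  exact_mod_cast gZ_min n (ℓ + 1) hn (by omega) (by omega)
end

section
/- Let k ≥ 1 and let r₁,…,r_k ≥ 1 be integers with r₁ + ⋯ + r_k = n, and let p₁,…,p_k be integers with p_j ≥ 1 for each j. Let M be an n×n real matrix that is block upper triangular with respect to the partition of {1,…,n} into consecutive blocks of sizes r₁,…,r_k (every block strictly below the block diagonal is zero) and whose j-th diagonal block equals H_{r_j} − u^(p_j) e₁ᵀ, i.e., the r_j×r_j matrix with (a,b) entry (1-based within the block) equal to 1/(a+b−1), except that the entries (a,1) with a > p_j are 0. Then M is invertible. -/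
open Matrix Finset

section HilbertHelpers

open Polynomial

noncomputable def gg (r a : ℕ) : ℝ :=
  (a + r).factorial / ((a.factorial : ℝ)^2 * (r - 1 - a).factorial)

noncomputable def WW (r i a : ℕ) : ℝ :=
  (-1)^(i+a) * gg r i * gg r a / ((i : ℝ) + a + 1)

private lemma gg_pos (r a : ℕ) : 0 < gg r a := by
  unfold gg
  positivity

private lemma eval_match (r i m : ℕ) (hi : i < r) (hm : m < r) :
    WW r i m * ((-1)^m * (m.factorial : ℝ) * (r-1-m).factorial)
      = ((-1:ℝ)^(r-1-i) * gg r i) *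
        ((-1)^(r-1) * ((m+r).factorial / (m.factorial * ((m:ℝ) + 1 + i)))) := by
  have hsign : ((-1:ℝ))^(r-1-i) * (-1)^(r-1) = (-1)^i := by
    have h : (r-1-i) + (r-1) = 2*(r-1-i) + i := by omega
    rw [← pow_add, h, pow_add, pow_mul]
    norm_num
  have hpow : ((-1:ℝ))^(i+m) = (-1)^i * (-1)^m := by rw [pow_add]
  have key : ((-1:ℝ)^(r-1-i) * gg r i) * ((-1)^(r-1) * ((m+r).factorial / (m.factorial * ((m:ℝ) + 1 + i))))
      = (-1:ℝ)^i * gg r i * ((m+r).factorial / (m.factorial * ((m:ℝ) + 1 + i))) := by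
    rw [show ((-1:ℝ)^(r-1-i) * gg r i) * ((-1)^(r-1) * ((m+r).factorial / (m.factorial * ((m:ℝ) + 1 + i))))
        = ((-1:ℝ)^(r-1-i) * (-1)^(r-1)) * (gg r i * ((m+r).factorial / (m.factorial * ((m:ℝ) + 1 + i)))) from by ring,
      hsign]
    ring
  rw [key, WW, hpow, gg, gg]
  have h1 : ((m:ℝ)+1+i) ≠ 0 := by positivity
  have h2 : ((i:ℝ)+m+1) ≠ 0 := by positivity
  field_simp
  ring_nf
  have hm2 : ((-1:ℝ))^(m*2) = 1 := by rw [pow_mul']; norm_num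
  rw [hm2]
  ring

private lemma prod_sub_nat' (m : ℕ) : ∏ j ∈ range m, ((m : ℝ) - j) = m.factorial := by
  induction m with
  | zero => simp
  | succ n ih =>
    rw [Finset.prod_range_succ']
    push_cast
    have : ∀ j ∈ range n, ((n:ℝ) + 1 - (j+1)) = (n:ℝ) - j := by intros; ring
    rw [Finset.prod_congr rfl this, ih]
    push_cast [Nat.factorial_succ]
    ring

private lemma prod_add_nat (m r : ℕ) :
    (∏ j ∈ range r, ((m : ℝ) + 1 + j)) * m.factorial = (m + r).factorial := by
  induction r with
  | zero => simp
  | succ n ih =>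
    rw [Finset.prod_range_succ]
    have : ((m + (n+1)).factorial : ℝ) = ((m:ℝ) + 1 + n) * (m+n).factorial := by
      have h : m + (n+1) = (m + n) + 1 := by omega
      rw [h, Nat.factorial_succ]
      push_cast
      ring
    rw [this, ← ih]
    ring

private lemma erase_eq_union (r m : ℕ) (hm : m < r) :
    (range r).erase m = range m ∪ Ico (m+1) r := by
  ext x
  simp only [mem_erase, mem_range, mem_union, mem_Ico]
  omega

private lemma prod_erase_sub (r m : ℕ) (hm : m < r) :
    ∏ j ∈ (range r).erase m, ((j : ℝ) - m)
      = (-1)^m * m.factorial * (r-1-m).factorial := by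
  rw [erase_eq_union r m hm, Finset.prod_union (by simp [Finset.disjoint_left]; omega)]
  have h1 : ∏ j ∈ range m, ((j : ℝ) - m) = (-1)^m * m.factorial := by
    have : ∀ j ∈ range m, ((j:ℝ) - m) = (-1) * ((m:ℝ) - j) := by intros; ring
    rw [Finset.prod_congr rfl this, Finset.prod_mul_distrib, Finset.prod_const,
      prod_sub_nat', card_range]
  have h2 : ∏ j ∈ Ico (m+1) r, ((j : ℝ) - m) = (r-1-m).factorial := by
    rw [Finset.prod_Ico_eq_prod_range]
    have : ∀ j ∈ range (r - (m+1)), ((↑(m+1+j) : ℝ) - m) = (j:ℝ) + 1 := by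
      intros j _; push_cast; ring
    rw [Finset.prod_congr rfl this]
    have h3 : r - (m+1) = r - 1 - m := by omega
    rw [h3]
    exact_mod_cast congrArg (Nat.cast : ℕ → ℝ) (Finset.prod_range_add_one_eq_factorial (r-1-m))
  rw [h1, h2]

-- ∏_{j ∈ erase i} (m+1+j) * (m+1+i) * m! = (m+r)!
private lemma prod_erase_add (r i m : ℕ) (hi : i < r) :
    (∏ j ∈ (range r).erase i, ((m : ℝ) + 1 + j)) * ((m:ℝ) + 1 + i) * m.factorial
      = (m + r).factorial := by
  rw [Finset.prod_erase_mul (range r) _ (mem_range.mpr hi)]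
  exact prod_add_nat m r

private lemma K1 (r : ℕ) (i b : ℕ) (hi : i < r) (hb : b < r) :
    ∑ a ∈ range r, WW r i a / ((a : ℝ) + b + 1)
      = if i = b then 1 else 0 := by
  classical
  set E : ℕ → Polynomial ℝ := fun a => ∏ j ∈ (range r).erase a, (X + C ((j:ℝ)+1)) with hE
  set P : Polynomial ℝ := ∑ a ∈ range r, C (WW r i a) * E a with hP
  set Q : Polynomial ℝ := C ((-1:ℝ)^(r-1-i) * gg r i) * ∏ j ∈ (range r).erase i, (X - C (j:ℝ)) with hQ
  -- degrees
  have hEdeg : ∀ a, a < r → (E a).natDegree ≤ r - 1 := by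
    intro a ha
    calc (E a).natDegree ≤ ∑ j ∈ (range r).erase a, (X + C ((j:ℝ)+1)).natDegree :=
          Polynomial.natDegree_prod_le _ _
    _ ≤ ∑ j ∈ (range r).erase a, 1 := by
          refine Finset.sum_le_sum ?_
          intro j _
          exact le_of_eq (Polynomial.natDegree_X_add_C _)
    _ ≤ r - 1 := by
          rw [Finset.sum_const, smul_eq_mul, mul_one,
            Finset.card_erase_of_mem (mem_range.mpr ha), card_range]
  have hPdeg : P.natDegree ≤ r - 1 := by
    refine Polynomial.natDegree_sum_le_of_forall_le _ _ ?_
    intro a ha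
    calc (C (WW r i a) * E a).natDegree ≤ (C (WW r i a)).natDegree + (E a).natDegree :=
          Polynomial.natDegree_mul_le
    _ ≤ r - 1 := by rw [Polynomial.natDegree_C]; simpa using hEdeg a (mem_range.mp ha)
  have hQdeg : Q.natDegree ≤ r - 1 := by
    calc Q.natDegree ≤ (C ((-1:ℝ)^(r-1-i) * gg r i)).natDegree
          + (∏ j ∈ (range r).erase i, (X - C (j:ℝ))).natDegree := Polynomial.natDegree_mul_le
    _ ≤ r - 1 := by
        rw [Polynomial.natDegree_C]
        simp only [zero_add]
        calc (∏ j ∈ (range r).erase i, (X - C (j:ℝ))).natDegree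
            ≤ ∑ j ∈ (range r).erase i, (X - C (j:ℝ)).natDegree := Polynomial.natDegree_prod_le _ _
        _ ≤ ∑ j ∈ (range r).erase i, 1 := by
            refine Finset.sum_le_sum ?_
            intro j _
            exact le_of_eq (Polynomial.natDegree_X_sub_C _)
        _ ≤ r - 1 := by
            rw [Finset.sum_const, smul_eq_mul, mul_one,
              Finset.card_erase_of_mem (mem_range.mpr hi), card_range]
  set nodes : Finset ℝ := (range r).image (fun m : ℕ => -((m:ℝ)+1)) with hnodes
  have hcard : nodes.card = r := by
    rw [hnodes, Finset.card_image_of_injOn, card_range]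
    intro x _ y _ h
    simp only at h
    have : (x:ℝ) = y := by linarith
    exact_mod_cast this
  have hdeg' : ∀ F : Polynomial ℝ, F.natDegree ≤ r - 1 → F.degree < (nodes.card : ℕ) := by
    intro F hF
    refine lt_of_le_of_lt (Polynomial.degree_le_natDegree) ?_
    rw [hcard]
    exact_mod_cast lt_of_le_of_lt hF (by omega)
  have heval : ∀ x ∈ nodes, P.eval x = Q.eval x := by
    intro x hx
    rw [hnodes] at hx
    simp only [mem_image, mem_range] at hx
    obtain ⟨m, hm, rfl⟩ := hx
    have hevalP : P.eval (-((m:ℝ)+1)) = WW r i m * ((-1)^m * m.factorial * (r-1-m).factorial) := by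
      rw [hP, Polynomial.eval_finset_sum]
      rw [Finset.sum_eq_single_of_mem m (mem_range.mpr hm)]
      · rw [Polynomial.eval_mul, Polynomial.eval_C, hE]
        simp only
        rw [Polynomial.eval_prod]
        congr 1
        have : ∀ j ∈ (range r).erase m,
            Polynomial.eval (-((m:ℝ)+1)) (X + C ((j:ℝ)+1)) = (j:ℝ) - m := by
          intro j _
          simp [Polynomial.eval_add]
          ring
        rw [Finset.prod_congr rfl this, prod_erase_sub r m hm]
      · intro a ha ham
        rw [Polynomial.eval_mul, Polynomial.eval_C, hE]
        simp only
        rw [Polynomial.eval_prod]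
        have hmem : m ∈ (range r).erase a := by
          rw [mem_erase]; exact ⟨Ne.symm ham, mem_range.mpr hm⟩
        rw [Finset.prod_eq_zero hmem (by simp [Polynomial.eval_add])]
        ring
    have hevalQ : Q.eval (-((m:ℝ)+1)) = ((-1:ℝ)^(r-1-i) * gg r i) *
        ((-1)^(r-1) * ((m+r).factorial / (m.factorial * ((m:ℝ) + 1 + i)))) := by
      rw [hQ, Polynomial.eval_mul, Polynomial.eval_C, Polynomial.eval_prod]
      congr 1
      have h1 : ∀ j ∈ (range r).erase i,
          Polynomial.eval (-((m:ℝ)+1)) (X - C (j:ℝ)) = (-1) * ((m:ℝ) + 1 + j) := by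
        intro j _
        simp [Polynomial.eval_sub]
        ring
      rw [Finset.prod_congr rfl h1, Finset.prod_mul_distrib, Finset.prod_const,
        Finset.card_erase_of_mem (mem_range.mpr hi), card_range]
      congr 1
      have h2 := prod_erase_add r i m hi
      have h3 : ((m:ℝ)+1+i) ≠ 0 := by positivity
      have h4 : (m.factorial : ℝ) ≠ 0 := by positivity
      field_simp
      linarith [h2]
    rw [hevalP, hevalQ]
    exact eval_match r i m hi hm
  have hPQ : P = Q :=
    Polynomial.eq_of_degrees_lt_of_eval_finset_eq nodes (hdeg' P hPdeg) (hdeg' Q hQdeg) heval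
  -- now evaluate at b
  have hposf : ∀ j : ℕ, ((b:ℝ) + 1 + j) ≠ 0 := by intro j; positivity
  have hprodpos : (0:ℝ) < ∏ j ∈ range r, ((b:ℝ) + 1 + j) :=
    Finset.prod_pos (fun j _ => by positivity)
  have h1 : (∑ a ∈ range r, WW r i a / ((a : ℝ) + b + 1)) * ∏ j ∈ range r, ((b:ℝ) + 1 + j)
      = P.eval ((b:ℝ)) := by
    rw [hP, Polynomial.eval_finset_sum, Finset.sum_mul]
    refine Finset.sum_congr rfl ?_
    intro a ha
    rw [Polynomial.eval_mul, Polynomial.eval_C, hE]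
    simp only
    rw [Polynomial.eval_prod]
    have hev : ∀ j ∈ (range r).erase a,
        Polynomial.eval ((b:ℝ)) (X + C ((j:ℝ)+1)) = (b:ℝ) + 1 + j := by
      intro j _; simp [Polynomial.eval_add]; ring
    rw [Finset.prod_congr rfl hev]
    rw [← Finset.mul_prod_erase (range r) (fun j => (b:ℝ) + 1 + j) ha]
    have hne : ((a:ℝ) + b + 1) ≠ 0 := by positivity
    field_simp
    ring
  rw [hPQ] at h1
  by_cases hib : i = b
  · subst hib
    rw [if_pos rfl]
    have hQb : Q.eval (i:ℝ) = gg r i * i.factorial * (r-1-i).factorial := by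
      rw [hQ, Polynomial.eval_mul, Polynomial.eval_C, Polynomial.eval_prod]
      have h1' : ∀ j ∈ (range r).erase i,
          Polynomial.eval ((i:ℝ)) (X - C (j:ℝ)) = (-1) * ((j:ℝ) - i) := by
        intro j _
        rw [Polynomial.eval_sub, Polynomial.eval_X, Polynomial.eval_C]
        ring
      rw [Finset.prod_congr rfl h1', Finset.prod_mul_distrib, Finset.prod_const,
        Finset.card_erase_of_mem (mem_range.mpr hi), card_range, prod_erase_sub r i hi]
      have hsign : ((-1:ℝ))^(r-1-i) * ((-1)^(r-1) * (-1)^i) = 1 := by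
        have h : (r-1-i) + ((r-1) + i) = 2*(r-1) := by omega
        calc ((-1:ℝ))^(r-1-i) * ((-1)^(r-1) * (-1)^i) = (-1)^((r-1-i) + ((r-1)+i)) := by
              rw [pow_add, pow_add]
        _ = 1 := by rw [h, pow_mul]; norm_num
      calc (-1:ℝ)^(r-1-i) * gg r i * ((-1)^(r-1) * ((-1)^i * i.factorial * (r-1-i).factorial))
          = ((-1:ℝ)^(r-1-i) * ((-1)^(r-1) * (-1)^i)) * (gg r i * i.factorial * (r-1-i).factorial) := by
            ring
      _ = gg r i * i.factorial * (r-1-i).factorial := by rw [hsign, one_mul]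
    have hprod : (∏ j ∈ range r, ((i:ℝ) + 1 + j)) * i.factorial = (i+r).factorial :=
      prod_add_nat i r
    have hggi : gg r i * i.factorial * (r-1-i).factorial * i.factorial = (i+r).factorial := by
      rw [gg]
      have h4 : (i.factorial : ℝ) ≠ 0 := by positivity
      have h5 : ((r-1-i).factorial : ℝ) ≠ 0 := by positivity
      field_simp
    have hfi : (i.factorial : ℝ) ≠ 0 := by positivity
    have hprodpos' : (0:ℝ) < ∏ j ∈ range r, ((i:ℝ) + 1 + j) :=
      Finset.prod_pos (fun j _ => by positivity)
    -- from h1 : sum * prod = Q.eval i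
    have : (∑ a ∈ range r, WW r i a / ((a : ℝ) + i + 1)) * ((∏ j ∈ range r, ((i:ℝ) + 1 + j)) * i.factorial)
        = (i+r).factorial := by
      rw [← mul_assoc, h1, hQb, ← hggi]
    rw [hprod] at this
    have hfr : ((i+r).factorial : ℝ) ≠ 0 := by positivity
    have h2 : (∑ a ∈ range r, WW r i a / ((a : ℝ) + i + 1)) * ((i+r).factorial : ℝ)
        = 1 * ((i+r).factorial : ℝ) := by rw [this, one_mul]
    exact mul_right_cancel₀ hfr h2
  · rw [if_neg hib]
    have hQb : Q.eval (b:ℝ) = 0 := by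
      rw [hQ, Polynomial.eval_mul, Polynomial.eval_C, Polynomial.eval_prod]
      have hbmem : b ∈ (range r).erase i := by
        rw [mem_erase]; exact ⟨fun h => hib h.symm, mem_range.mpr hb⟩
      rw [Finset.prod_eq_zero hbmem (by simp)]
      ring
    rw [hQb] at h1
    exact (mul_eq_zero.mp h1).resolve_right (ne_of_gt hprodpos)


private lemma gg_zero (r : ℕ) (hr : 1 ≤ r) : gg r 0 = r := by
  obtain ⟨s, rfl⟩ : ∃ s, r = s + 1 := ⟨r - 1, by omega⟩
  rw [gg]
  have hne : ((s.factorial : ℝ)) ≠ 0 := by positivity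
  simp [Nat.factorial_succ]
  field_simp

private lemma Kstep (r p : ℕ) (hpr : p < r) :
    (((r-1).choose p : ℝ)) * ((r+p).choose p)
      + (((r-1).choose (p+1) : ℝ)) * ((r+p+1).choose (p+1))
      = r * gg r p / (((p:ℝ)+1)*((p:ℝ)+1)) := by
  obtain ⟨s, rfl⟩ : ∃ s, r = p + 1 + s := ⟨r - p - 1, by omega⟩
  have e1 : p + 1 + s - 1 = p + s := by omega
  have e2 : p + 1 + s + p = 2*p + 1 + s := by omega
  have e3 : p + 1 + s + p + 1 = 2*p + 2 + s := by omega
  have e4 : p + 1 + s - 1 - p = s := by omega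
  have e5 : p + (p + 1 + s) = 2*p + 1 + s := by omega
  rw [e1, e2, show 2*p+1+s+1 = 2*p+2+s from by omega, gg, e4, e5]
  have hfp : ((p.factorial : ℝ)) ≠ 0 := by positivity
  have hfs : ((s.factorial : ℝ)) ≠ 0 := by positivity
  have hc1 : ((p+s).choose p : ℝ) = (p+s).factorial / (p.factorial * s.factorial) := by
    rw [Nat.cast_choose ℝ (by omega : p ≤ p + s), show p + s - p = s from by omega]
  have hc2 : ((2*p+1+s).choose p : ℝ)
      = (2*p+1+s).factorial / (p.factorial * (p+1+s).factorial) := by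
    rw [Nat.cast_choose ℝ (by omega : p ≤ 2*p+1+s), show 2*p+1+s - p = p+1+s from by omega]
  have hc4 : ((2*p+2+s).choose (p+1) : ℝ)
      = (2*p+2+s).factorial / ((p+1).factorial * (p+1+s).factorial) := by
    rw [Nat.cast_choose ℝ (by omega : p+1 ≤ 2*p+2+s), show 2*p+2+s - (p+1) = p+1+s from by omega]
  have hfac1 : ((2*p+2+s).factorial : ℝ) = (2*p+2+s) * (2*p+1+s).factorial := by
    rw [show 2*p+2+s = (2*p+1+s)+1 from by omega, Nat.factorial_succ]
    push_cast
    ring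
  have hfac2 : (((p+1).factorial : ℝ)) = (p+1) * p.factorial := by
    rw [Nat.factorial_succ]
    push_cast
    ring
  have hfac3 : (((p+1+s).factorial : ℝ)) ≠ 0 := by positivity
  rcases Nat.eq_zero_or_pos s with hs | hs
  · subst hs
    have hz : ((p+0).choose (p+1) : ℝ) = 0 := by
      rw [Nat.choose_eq_zero_of_lt (by omega)]
      norm_num
    rw [hz]
    rw [hc1, hc2]
    have hfac4 : ((p+1+0).factorial : ℝ) = (p+1) * p.factorial := by
      rw [show p+1+0 = p+1 from by omega, hfac2]
    rw [hfac4]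
    have h1 : ((p+0).factorial : ℝ) = p.factorial := by norm_num
    rw [h1]
    push_cast
    field_simp
    ring
  · obtain ⟨t, rfl⟩ : ∃ t, s = t + 1 := ⟨s - 1, by omega⟩
    have hc3 : ((p+(t+1)).choose (p+1) : ℝ)
        = (p+t+1).factorial / ((p+1).factorial * t.factorial) := by
      rw [show p+(t+1) = (p+t)+1 from by omega]
      rw [Nat.cast_choose ℝ (by omega : p+1 ≤ p+t+1), show p+t+1 - (p+1) = t from by omega]
    have hft : ((t.factorial : ℝ)) ≠ 0 := by positivity
    have hfs1 : (((t+1).factorial : ℝ)) = (t+1) * t.factorial := by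
      rw [Nat.factorial_succ]; push_cast; ring
    have hfpt : ((p+(t+1)).factorial : ℝ) = (p+t+1).factorial := by
      rw [show p+(t+1) = p+t+1 from by omega]
    rw [hc1, hc2, hc3, hc4, hfac1, hfac2, hfpt, hfs1]
    have hkey : ((p:ℝ)+1)*((p:ℝ)+1) + (t+1)*((2:ℝ)*p+2+(t+1)) = ((p:ℝ)+1+(t+1))^2 := by
      push_cast
      ring
    have hfpt1 : (((p+t+1).factorial : ℝ)) ≠ 0 := by positivity
    have hf21 : (((2*p+1+(t+1)).factorial : ℝ)) ≠ 0 := by positivity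
    have hfq : (((p+1+(t+1)).factorial : ℝ)) = ((p:ℝ)+1+(t+1)) * (p+t+1).factorial := by
      rw [show p+1+(t+1) = (p+t+1)+1 from by omega, Nat.factorial_succ]
      push_cast
      ring
    rw [hfq]
    push_cast
    field_simp
    ring

private lemma K2big (r p : ℕ) (hr : 1 ≤ r) (hrp : r ≤ p) :
    ∑ a ∈ range r, (if p ≤ a then WW r 0 a / ((a:ℝ)+1) else 0)
      = (-1:ℝ)^p * ((r-1).choose p) * ((r+p).choose p) := by
  have h : ∀ a ∈ range r, (if p ≤ a then WW r 0 a / ((a:ℝ)+1) else 0) = 0 := by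
    intro a ha
    rw [if_neg (by rw [mem_range] at ha; omega)]
  rw [Finset.sum_congr rfl h, Finset.sum_const, smul_zero,
    Nat.choose_eq_zero_of_lt (show r-1 < p from by omega)]
  norm_num

private lemma K2 (r p : ℕ) (hr : 1 ≤ r) :
    ∑ a ∈ range r, (if p ≤ a then WW r 0 a / ((a:ℝ)+1) else 0)
      = (-1:ℝ)^p * ((r-1).choose p) * ((r+p).choose p) := by
  suffices h : ∀ n (p' : ℕ), r ≤ p' + n →
      ∑ a ∈ range r, (if p' ≤ a then WW r 0 a / ((a:ℝ)+1) else 0)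
        = (-1:ℝ)^p' * ((r-1).choose p') * ((r+p').choose p') by
    exact h r p (by omega)
  intro n
  induction n with
  | zero => intro p' hp'; exact K2big r p' hr (by omega)
  | succ n ih =>
    intro p' hp'
    by_cases hpr : r ≤ p'
    · exact K2big r p' hr hpr
    · push_neg at hpr
      have hsplit : (range r).filter (fun a => p' ≤ a)
          = insert p' ((range r).filter (fun a => p'+1 ≤ a)) := by
        ext x
        simp only [mem_filter, mem_range, mem_insert]
        omega
      have hnotmem : p' ∉ (range r).filter (fun a => p'+1 ≤ a) := by
        simp
      rw [← Finset.sum_filter, hsplit, Finset.sum_insert hnotmem, Finset.sum_filter,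
        ih (p'+1) (by omega)]
      have hW : WW r 0 p' / ((p':ℝ)+1) = (-1:ℝ)^p' * (r * gg r p' / (((p':ℝ)+1)*((p':ℝ)+1))) := by
        rw [WW, gg_zero r hr]
        rw [show ((0:ℕ):ℝ) + (p':ℝ) + 1 = (p':ℝ)+1 from by push_cast; ring]
        rw [show (0:ℕ) + p' = p' from by omega]
        field_simp
      rw [hW, ← Kstep r p' hpr]
      rw [show r + (p'+1) = r + p' + 1 from by omega]
      rw [pow_succ]
      push_cast
      ring

private lemma core (r p : ℕ) (hr : 1 ≤ r) (hp : 1 ≤ p) (c : ℕ → ℝ)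
    (heq : ∀ a < r, ∑ q ∈ range r,
      (if q = 0 ∧ p ≤ a then (0:ℝ) else 1/((a:ℝ)+q+1)) * c q = 0) :
    ∀ q < r, c q = 0 := by
  have hHc : ∀ a, a < r → ∑ q ∈ range r, c q / ((a:ℝ)+q+1)
      = (if p ≤ a then c 0/((a:ℝ)+1) else 0) := by
    intro a ha
    have hptw : ∀ q ∈ range r,
        c q/((a:ℝ)+q+1) - (if q = 0 ∧ p ≤ a then (0:ℝ) else 1/((a:ℝ)+q+1)) * c q
          = (if q = 0 then (if p ≤ a then c 0/((a:ℝ)+1) else 0) else 0) := by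
      intro q _
      by_cases hq : q = 0
      · subst hq
        by_cases hpa : p ≤ a
        · rw [if_pos ⟨rfl, hpa⟩, if_pos rfl, if_pos hpa]
          push_cast
          ring
        · rw [if_neg (by tauto), if_pos rfl, if_neg hpa]
          push_cast
          ring
      · rw [if_neg (by tauto), if_neg hq]
        ring
    have hsum := Finset.sum_congr rfl hptw
    rw [Finset.sum_sub_distrib, heq a ha, sub_zero] at hsum
    rw [hsum, Finset.sum_ite_eq' (range r) 0]
    rw [if_pos (mem_range.mpr (by omega))]
  have hrep : ∀ i, i < r → c i
      = c 0 * ∑ a ∈ range r, (if p ≤ a then WW r i a / ((a:ℝ)+1) else 0) := by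
    intro i hi
    have step1 : c i = ∑ b ∈ range r, (if i = b then (1:ℝ) else 0) * c b := by
      have : ∀ b ∈ range r, (if i = b then (1:ℝ) else 0) * c b
          = (if i = b then c b else 0) := by
        intro b _; split_ifs <;> ring
      rw [Finset.sum_congr rfl this, Finset.sum_ite_eq (range r) i,
        if_pos (mem_range.mpr hi)]
    rw [step1]
    have step2 : ∀ b ∈ range r, (if i = b then (1:ℝ) else 0) * c b
        = ∑ a ∈ range r, WW r i a / ((a:ℝ)+b+1) * c b := by
      intro b hb
      rw [← Finset.sum_mul, K1 r i b hi (mem_range.mp hb)]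
    rw [Finset.sum_congr rfl step2, Finset.sum_comm]
    have step3 : ∀ a ∈ range r, ∑ b ∈ range r, WW r i a / ((a:ℝ)+b+1) * c b
        = WW r i a * (if p ≤ a then c 0/((a:ℝ)+1) else 0) := by
      intro a ha
      rw [← hHc a (mem_range.mp ha), Finset.mul_sum]
      refine Finset.sum_congr rfl ?_
      intro b _
      ring
    rw [Finset.sum_congr rfl step3, Finset.mul_sum]
    refine Finset.sum_congr rfl ?_
    intro a _
    split_ifs <;> ring
  have hc0 : c 0 = 0 := by
    have h := hrep 0 (by omega)
    rw [K2 r p hr] at h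
    have hne : (-1:ℝ)^p * ((r-1).choose p) * ((r+p).choose p) ≠ 1 := by
      by_cases hpr : p < r
      · have h2 : (2:ℕ) ≤ (r+p).choose p := by
          calc (2:ℕ) ≤ p + 1 := by omega
          _ = (p+1).choose p := (Nat.choose_succ_self_right p).symm
          _ ≤ (r+p).choose p := Nat.choose_le_choose p (by omega)
        have h1 : (1:ℕ) ≤ (r-1).choose p := Nat.choose_pos (by omega)
        have hB : (2:ℝ) ≤ ((r-1).choose p : ℝ) * ((r+p).choose p) := by
          calc (2:ℝ) = 1 * 2 := by norm_num
          _ ≤ ((r-1).choose p : ℝ) * ((r+p).choose p) := by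
              apply mul_le_mul <;> [exact_mod_cast h1; exact_mod_cast h2; norm_num; positivity]
        rcases Nat.even_or_odd p with he | ho
        · rw [he.neg_one_pow]
          intro hcon
          rw [one_mul] at hcon
          linarith
        · rw [ho.neg_one_pow]
          intro hcon
          nlinarith
      · rw [Nat.choose_eq_zero_of_lt (show r-1 < p from by omega)]
        norm_num
    have h2 : c 0 * ((-1:ℝ)^p * ((r-1).choose p) * ((r+p).choose p) - 1) = 0 := by
      rw [mul_sub, ← h, mul_one, sub_self]
    rcases mul_eq_zero.mp h2 with h' | h'
    · exact h'
    · exact absurd (sub_eq_zero.mp h') hne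
  intro q hq
  rw [hrep q hq, hc0, zero_mul]


end HilbertHelpers

/-- Let `n = r 0 + ⋯ + r (k-1)` with `k ≥ 1` and each block size `r j ≥ 1`, and let
`p j ≥ 1` for each `j < k`. Suppose `blk i` and `pos i` give the block index and the
(0-based) position within its block of each index `i : Fin n`, for the partition of
`{0, …, n−1}` into consecutive blocks of sizes `r 0, …, r (k−1)`. If
`M : Matrix (Fin n) (Fin n) ℝ` is block upper triangular with respect to this
partition (every block strictly below the block diagonal is zero) and its `j`-th
diagonal block is `H_{r j} − u^(p j) e₁ᵀ` (entry `(a, b)`, 0-based within the block,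
equal to `1/(a + b + 1)`, except that the entries `(a, 0)` with `a ≥ p j` are `0`),
then `M` is invertible. -/

theorem block_triangular_sparse_hilbert_invertible
    (k n : ℕ) (hk : 1 ≤ k) (r p : ℕ → ℕ)
    (hr : ∀ j < k, 1 ≤ r j) (hp : ∀ j < k, 1 ≤ p j)
    (hsum : ∑ j ∈ Finset.range k, r j = n)
    (blk pos : Fin n → ℕ)
    (hblk : ∀ i : Fin n, blk i < k ∧ pos i < r (blk i) ∧
      (i : ℕ) = (∑ t ∈ Finset.range (blk i), r t) + pos i)
    (M : Matrix (Fin n) (Fin n) ℝ)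
    (hlow : ∀ i j : Fin n, blk j < blk i → M i j = 0)
    (hdiag : ∀ i j : Fin n, blk i = blk j →
      M i j = if pos j = 0 ∧ p (blk i) ≤ pos i then 0
        else (1 : ℝ) / (pos i + pos j + 1)) :
    IsUnit M := by
  classical
  have huniq : ∀ (i : Fin n) (J' q : ℕ), J' < k → q < r J' →
      (i : ℕ) = (∑ t ∈ Finset.range J', r t) + q → blk i = J' ∧ pos i = q := by
    intro i J' q hJ' hq hiq
    obtain ⟨h1, h2, h3⟩ := hblk i
    have hbe : blk i = J' := by
      by_contra hne
      rcases lt_or_gt_of_ne hne with hlt | hgt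
      · have hA : (∑ t ∈ Finset.range (blk i + 1), r t) ≤ ∑ t ∈ Finset.range J', r t :=
          Finset.sum_le_sum_of_subset (Finset.range_subset_range.mpr (by omega))
        rw [Finset.sum_range_succ] at hA
        omega
      · have hA : (∑ t ∈ Finset.range (J' + 1), r t) ≤ ∑ t ∈ Finset.range (blk i), r t :=
          Finset.sum_le_sum_of_subset (Finset.range_subset_range.mpr (by omega))
        rw [Finset.sum_range_succ] at hA
        omega
    refine ⟨hbe, ?_⟩
    rw [hbe] at h3
    omega
  have hker : ∀ v : Fin n → ℝ, M.mulVec v = 0 → v = 0 := by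
    intro v hv
    have key : ∀ d : ℕ, ∀ i : Fin n, k ≤ blk i + d → v i = 0 := by
      intro d
      induction d with
      | zero =>
        intro i hi
        exact absurd hi (by have := (hblk i).1; omega)
      | succ d ih =>
        intro i₀ hi₀
        by_cases hdone : k ≤ blk i₀ + d
        · exact ih i₀ hdone
        set J := blk i₀ with hJ
        have hJk : J < k := (hblk i₀).1
        set off := ∑ t ∈ Finset.range J, r t with hoff
        have hofflt : ∀ q, q < r J → off + q < n := by
          intro q hq
          have h1 : off + r J = ∑ t ∈ Finset.range (J+1), r t := by
            rw [Finset.sum_range_succ]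
          have h2 : ∑ t ∈ Finset.range (J+1), r t ≤ ∑ t ∈ Finset.range k, r t :=
            Finset.sum_le_sum_of_subset (Finset.range_subset_range.mpr (by omega))
          omega
        have hn : 0 < n := i₀.pos
        set jfun : ℕ → Fin n := fun q => if h : off + q < n then ⟨off+q, h⟩ else ⟨0, hn⟩
          with hjfun
        have hjval : ∀ q, q < r J → ((jfun q : Fin n) : ℕ) = off + q := by
          intro q hq
          rw [hjfun]
          simp only [dif_pos (hofflt q hq)]
        have hjblk : ∀ q, q < r J → blk (jfun q) = J ∧ pos (jfun q) = q := by
          intro q hq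
          exact huniq (jfun q) J q hJk hq (hjval q hq)
        set c : ℕ → ℝ := fun q => v (jfun q) with hc
        -- the block equations
        have heq : ∀ a < r J, ∑ q ∈ range (r J),
            (if q = 0 ∧ p J ≤ a then (0:ℝ) else 1/((a:ℝ)+q+1)) * c q = 0 := by
          intro a ha
          have hia := congrFun hv (jfun a)
          rw [Matrix.mulVec, Pi.zero_apply] at hia
          rw [show (M (jfun a) ⬝ᵥ v) = ∑ j, M (jfun a) j * v j from rfl] at hia
          have hfilter : ∑ j, M (jfun a) j * v j
              = ∑ j ∈ Finset.univ.filter (fun j => blk j = J), M (jfun a) j * v j := by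
            symm
            apply Finset.sum_subset (Finset.filter_subset _ _)
            intro j _ hjn
            rw [Finset.mem_filter] at hjn
            push_neg at hjn
            have hjne : blk j ≠ J := hjn (Finset.mem_univ j)
            rcases lt_or_gt_of_ne hjne with hlt | hgt
            · rw [hlow (jfun a) j (by rw [(hjblk a ha).1]; exact hlt), zero_mul]
            · rw [ih j (by omega), mul_zero]
          have himage : Finset.univ.filter (fun j => blk j = J)
              = (range (r J)).image jfun := by
            ext j
            simp only [Finset.mem_filter, Finset.mem_univ, true_and, Finset.mem_image,
              mem_range]
            constructor
            · intro hbj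
              refine ⟨pos j, ?_, ?_⟩
              · have := (hblk j).2.1
                rw [hbj] at this
                exact this
              · have h3 := (hblk j).2.2
                rw [hbj] at h3
                apply Fin.ext
                rw [hjval (pos j) (by have := (hblk j).2.1; rw [hbj] at this; exact this)]
                omega
            · rintro ⟨q, hq, rfl⟩
              exact (hjblk q hq).1
          have hinj : Set.InjOn jfun (range (r J)) := by
            intro x hx y hy hxy
            have hx' := hjval x (mem_range.mp hx)
            have hy' := hjval y (mem_range.mp hy)
            have : ((jfun x : Fin n) : ℕ) = ((jfun y : Fin n) : ℕ) := by rw [hxy]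
            omega
          calc ∑ q ∈ range (r J), (if q = 0 ∧ p J ≤ a then (0:ℝ) else 1/((a:ℝ)+q+1)) * c q
              = ∑ q ∈ range (r J), M (jfun a) (jfun q) * v (jfun q) := by
                refine Finset.sum_congr rfl ?_
                intro q hq
                have hbq := (hjblk q (mem_range.mp hq)).1
                have hpq := (hjblk q (mem_range.mp hq)).2
                have hba := (hjblk a ha).1
                have hpa := (hjblk a ha).2
                rw [hdiag (jfun a) (jfun q) (by rw [hba, hbq]), hba, hpa, hpq]
          _ = 0 := by
                rw [hfilter, himage, Finset.sum_image hinj] at hia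
                exact hia
        have hzero := core (r J) (p J) (hr J hJk) (hp J hJk) c heq
        -- v i₀ = c (pos i₀)
        have hposlt : pos i₀ < r J := (hblk i₀).2.1
        have : jfun (pos i₀) = i₀ := by
          apply Fin.ext
          rw [hjval (pos i₀) hposlt]
          exact ((hblk i₀).2.2).symm
        rw [← this]
        exact hzero (pos i₀) hposlt
    funext i
    exact key k i (by omega)
  rw [Matrix.isUnit_iff_isUnit_det, isUnit_iff_ne_zero]
  intro hdet
  obtain ⟨v, hvne, hveq⟩ := (Matrix.exists_mulVec_eq_zero_iff).mpr hdet
  exact hvne (hker v hveq)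
end

section
/- For all integers n ≥ 1 and ℓ ≥ 0, the identity n² · ∑_{k=ℓ+1}^{n} (−1)^(k+1) · choose(n, n−k) · choose(n+k−1, n−1) = (−1)^ℓ · (ℓ+1)² · choose(n, n−ℓ−1) · choose(n+ℓ, n−1) holds in ℤ. -/
open Finset

lemma key_nat (n m : ℕ) (h2 : m + 1 ≤ n) :
    (n - m) * ((n + m) * (n.choose m * (n + m - 1).choose (n - 1))) =
      (m + 1) * ((m + 1) * (n.choose (m + 1) * (n + m).choose (n - 1))) := by
  have hA := Nat.choose_succ_right_eq n m
  have hB := Nat.add_one_mul_choose_eq (n + m - 1) m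
  have e1 : n + m - 1 + 1 = n + m := by omega
  have e2 : (n + m - 1).choose m = (n + m - 1).choose (n - 1) := by
    rw [← Nat.choose_symm (by omega : n - 1 ≤ n + m - 1)]
    congr 1
    omega
  have e3 : (n + m).choose (m + 1) = (n + m).choose (n - 1) := by
    rw [← Nat.choose_symm (by omega : m + 1 ≤ n + m)]
    congr 1
    omega
  rw [e1, e2, e3] at hB
  calc (n - m) * ((n + m) * (n.choose m * (n + m - 1).choose (n - 1)))
      = (n.choose m * (n - m)) * ((n + m) * (n + m - 1).choose (n - 1)) := by ring
    _ = (n.choose (m + 1) * (m + 1)) * ((n + m).choose (n - 1) * (m + 1)) := by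
        rw [← hA, hB]
    _ = (m + 1) * ((m + 1) * (n.choose (m + 1) * (n + m).choose (n - 1))) := by ring

lemma key_s13 (n m : ℕ) (h2 : m + 1 ≤ n) :
    ((n : ℤ) - m) * ((n : ℤ) + m) * (n.choose (n - m) : ℤ) * ((n + m - 1).choose (n - 1) : ℤ) =
      ((m : ℤ) + 1) ^ 2 * (n.choose (n - m - 1) : ℤ) * ((n + m).choose (n - 1) : ℤ) := by
  have h := key_nat n m h2
  have s1 : n.choose (n - m) = n.choose m := Nat.choose_symm (by omega)
  have s2 : n.choose (n - m - 1) = n.choose (m + 1) := by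
    rw [show n - m - 1 = n - (m + 1) by omega]
    exact Nat.choose_symm (by omega)
  rw [s1, s2]
  zify [show m ≤ n by omega] at h
  linarith [h]

lemma aux (n : ℕ) (hn : 1 ≤ n) : ∀ d ℓ : ℕ, n ≤ ℓ + d →
    (n : ℤ) ^ 2 * ∑ k ∈ Finset.Icc (ℓ + 1) n,
        (-1) ^ (k + 1) * (n.choose (n - k) : ℤ) * ((n + k - 1).choose (n - 1) : ℤ) =
      (-1) ^ ℓ * ((ℓ : ℤ) + 1) ^ 2 *
        (if ℓ + 1 ≤ n then (n.choose (n - ℓ - 1) : ℤ) else 0) *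
        ((n + ℓ).choose (n - 1) : ℤ) := by
  intro d
  induction d with
  | zero =>
    intro ℓ hℓ
    rw [Finset.Icc_eq_empty (by omega), if_neg (by omega)]
    simp
  | succ d ih =>
    intro ℓ hℓ
    by_cases h : ℓ + 1 ≤ n
    · have hsplit : Finset.Icc (ℓ + 1) n = insert (ℓ + 1) (Finset.Icc (ℓ + 2) n) := by
        ext x; simp; omega
      rw [hsplit, Finset.sum_insert (by simp)]
      have hih := ih (ℓ + 1) (by omega)
      rw [if_pos h]
      push_cast at hih ⊢
      rcases Nat.lt_or_ge (ℓ + 1) n with h2 | h2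
      · -- ℓ + 2 ≤ n
        rw [if_pos (by omega : ℓ + 1 + 1 ≤ n)] at hih
        have hk := key_s13 n (ℓ + 1) (by omega : (ℓ + 1) + 1 ≤ n)
        push_cast at hk
        rw [show n + (ℓ + 1) - 1 = n + ℓ from by omega] at hk
        rw [mul_add, hih]
        rw [show n + (ℓ + 1) - 1 = n + ℓ from by omega,
          show n - (ℓ + 1) = n - ℓ - 1 from by omega,
          show (-1:ℤ)^(ℓ+1+1) = (-1)^ℓ from by rw [pow_succ, pow_succ]; ring,
          show (-1:ℤ)^(ℓ+1) = -(-1)^ℓ from by rw [pow_succ]; ring]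
        rw [show n - (ℓ + 1) = n - ℓ - 1 from by omega] at hk
        linear_combination (-1:ℤ)^ℓ * hk
      · -- ℓ + 1 = n
        have hen : ℓ + 1 = n := by omega
        subst hen
        rw [Finset.Icc_eq_empty (by omega), Finset.sum_empty, add_zero]
        rw [show ℓ + 1 - (ℓ + 1) = 0 from by omega,
          show ℓ + 1 - ℓ - 1 = 0 from by omega,
          show ℓ + 1 + (ℓ + 1) - 1 = ℓ + 1 + ℓ from by omega,
          show (-1:ℤ)^(ℓ+1+1) = (-1)^ℓ from by rw [pow_succ, pow_succ]; ring]
        simp only [Nat.choose_zero_right, Nat.cast_one]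
        push_cast
        ring
    · rw [Finset.Icc_eq_empty (by omega), if_neg (by omega)]
      simp

/-- For all `n ≥ 1` and `ℓ ≥ 0`,
`n² ∑_{k=ℓ+1}^{n} (−1)^{k+1} C(n, n−k) C(n+k−1, n−1)
  = (−1)^ℓ (ℓ+1)² C(n, n−ℓ−1) C(n+ℓ, n−1)` in `ℤ`,
where `C(n, n−ℓ−1)` is interpreted as `0` when `ℓ ≥ n` (the sum being empty then). -/
theorem sum_eq_Z (n ℓ : ℕ) (hn : 1 ≤ n) :
    (n : ℤ) ^ 2 * ∑ k ∈ Finset.Icc (ℓ + 1) n,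
        (-1) ^ (k + 1) * (n.choose (n - k) : ℤ) * ((n + k - 1).choose (n - 1) : ℤ) =
      (-1) ^ ℓ * ((ℓ : ℤ) + 1) ^ 2 *
        (if ℓ + 1 ≤ n then (n.choose (n - ℓ - 1) : ℤ) else 0) *
        ((n + ℓ).choose (n - 1) : ℤ) := by
  exact aux n hn (n + 1) ℓ (by omega)
end

section
/- For every n ≥ 2 and every integer ℓ ≥ 1, det(H_n − u^(ℓ) e₁ᵀ) = (1 − Z(ℓ,n)/n²) · det(H_n), where the determinant is taken over ℝ and Z(ℓ,n)/n² is computed in ℝ. -/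
open Matrix

section Aux

open Finset Polynomial


open Finset

-- products
lemma prod_range_asc (i : ℕ) : ∀ n : ℕ, (∏ k ∈ range n, (i + 1 + k)) = (i+1).ascFactorial n
  | 0 => by simp
  | n+1 => by rw [prod_range_succ, prod_range_asc i n, Nat.ascFactorial_succ]; ring

lemma prod_range_add_real (i n : ℕ) :
    (Nat.factorial i : ℝ) * ∏ k ∈ range n, ((i : ℝ) + k + 1) = Nat.factorial (i + n) := by
  have h : (∏ k ∈ range n, ((i : ℝ) + k + 1)) = ((∏ k ∈ range n, (i + 1 + k) : ℕ) : ℝ) := by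
    push_cast; exact prod_congr rfl (fun k _ => by ring)
  rw [h, prod_range_asc, ← Nat.cast_mul, Nat.factorial_mul_ascFactorial]

lemma erase_range_zero (n : ℕ) : (range n).erase 0 = (range (n-1)).image (· + 1) := by
  ext m; simp only [mem_erase, mem_range, mem_image]
  constructor
  · rintro ⟨h0, hm⟩; exact ⟨m - 1, by omega, by omega⟩
  · rintro ⟨k, hk, rfl⟩; omega

lemma prod_erase_zero (n : ℕ) :
    (∏ k ∈ (range n).erase 0, (k : ℝ)) = Nat.factorial (n - 1) := by
  rw [erase_range_zero, prod_image (by intro a _ b _ h; simp only at h; omega)]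
  rw [← Finset.prod_range_add_one_eq_factorial (n-1)]
  push_cast; rfl

lemma erase_range_split (n i : ℕ) (hi : i < n) :
    (range n).erase i = range i ∪ Ico (i+1) n := by
  ext m; simp only [mem_erase, mem_range, mem_union, mem_Ico]; omega

lemma prod_range_sub_self (i : ℕ) : (∏ k ∈ range i, ((i : ℝ) - k)) = Nat.factorial i := by
  induction i with
  | zero => simp
  | succ m ih =>
    rw [Finset.prod_range_succ']
    have : (∏ k ∈ range m, ((m:ℝ) + 1 - (k+1))) = ∏ k ∈ range m, ((m:ℝ) - k) := by
      exact prod_congr rfl (fun k _ => by ring)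
    push_cast
    rw [this, ih, Nat.factorial_succ]
    push_cast; ring

lemma prod_erase_sub_s17 (n i : ℕ) (hi : i < n) :
    (∏ k ∈ (range n).erase i, ((i : ℝ) - k)) =
      (-1)^(n-1-i) * Nat.factorial i * Nat.factorial (n-1-i) := by
  rw [erase_range_split n i hi, prod_union (by simp [Finset.disjoint_left]; omega)]
  rw [prod_range_sub_self]
  have h2 : (∏ k ∈ Ico (i+1) n, ((i : ℝ) - k)) = (-1)^(n-1-i) * Nat.factorial (n-1-i) := by
    rw [Finset.prod_Ico_eq_prod_range]
    have : ∀ k ∈ range (n - (i+1)), ((i:ℝ) - ((i+1+k : ℕ):ℝ)) = (-1) * ((k:ℝ)+1) := by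
      intro k _; push_cast; ring
    rw [prod_congr rfl this, prod_mul_distrib, prod_const, card_range]
    have : n - (i+1) = n - 1 - i := by omega
    rw [this]
    congr 1
    rw [← Finset.prod_range_add_one_eq_factorial]
    push_cast; rfl
  rw [h2]; ring

lemma prod_neg_one_sub (n : ℕ) :
    (∏ k ∈ range n, (-1 - (k:ℝ))) = (-1)^n * Nat.factorial n := by
  have : ∀ k ∈ range n, (-1 - (k:ℝ)) = (-1) * ((k:ℝ)+1) := fun k _ => by ring
  rw [prod_congr rfl this, prod_mul_distrib, prod_const, card_range]
  congr 1
  rw [← Finset.prod_range_add_one_eq_factorial]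
  push_cast; rfl


open Finset

lemma key_step (n L : ℕ) (h : L + 2 ≤ n) :
    ((L:ℤ)+2)^2 * (n.choose (n-2-L)) * ((n+L+1).choose (n-1)) =
      ((n:ℤ)^2 - ((L:ℤ)+1)^2) * n.choose (n-1-L) * (n+L).choose (n-1) := by
  have h1 : n.choose (n-1-L) * (n-1-L) = n.choose (n-2-L) * (L+2) := by
    have := Nat.choose_succ_right_eq n (n-2-L)
    rw [show n-2-L+1 = n-1-L by omega, show n - (n-2-L) = L+2 by omega] at this
    exact this
  have h2 : (n+L).choose (n-1) * (n+L+1) = (n+L+1).choose (n-1) * (L+2) := by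
    have hs1 : (n+L).choose (n-1) = (n+L).choose (L+1) := by
      rw [show n-1 = (n+L)-(L+1) by omega, Nat.choose_symm (by omega)]
    have hs2 : (n+L+1).choose (n-1) = (n+L+1).choose (L+2) := by
      rw [show n-1 = (n+L+1)-(L+2) by omega, Nat.choose_symm (by omega)]
    have key : (n+L+1) * (n+L).choose (L+1) = (n+L+1).choose (L+2) * (L+2) := by
      simpa [Nat.succ_eq_add_one] using Nat.add_one_mul_choose_eq (n+L) (L+1)
    rw [hs1, hs2, Nat.mul_comm]
    exact key
  have h1' : (n.choose (n-1-L) : ℤ) * ((n:ℤ)-1-L) = n.choose (n-2-L) * ((L:ℤ)+2) := by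
    have := congrArg (Nat.cast : ℕ → ℤ) h1
    push_cast [show ((n-1-L : ℕ):ℤ) = (n:ℤ)-1-L by omega] at this ⊢
    linarith
  have h2' : ((n+L).choose (n-1) : ℤ) * ((n:ℤ)+L+1) = (n+L+1).choose (n-1) * ((L:ℤ)+2) := by
    exact_mod_cast congrArg (Nat.cast : ℕ → ℤ) h2
  linear_combination (-(((L:ℤ)+2) * ((n+L+1).choose (n-1) : ℤ))) * h1' -
    ((((n:ℤ)-1-(L:ℤ)) * (n.choose (n-1-L) : ℤ))) * h2'

lemma key_sum (n : ℕ) (hn : 1 ≤ n) : ∀ L, L ≤ n →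
    (n:ℤ)^2 * (∑ i ∈ range L, (-1:ℤ)^i * (n.choose (n-1-i)) * ((n+i).choose (n-1)))
      = n^2 - Z L n
  | 0, _ => by
    have h1 : n.choose (n-1) = n := by
      rw [show n-1 = n-(1:ℕ) from rfl, Nat.choose_symm hn, Nat.choose_one_right]
    simp [Z, show n - 0 - 1 = n - 1 by omega, h1, hn]
    ring
  | L+1, hL => by
    rw [sum_range_succ, mul_add, key_sum n hn L (by omega)]
    have hif : L + 1 ≤ n := hL
    have hZL : Z L n = (-1)^L * ((L:ℤ)+1)^2 * (n.choose (n-1-L)) * ((n+L).choose (n-1)) := by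
      rw [Z, if_pos hif, show n - L - 1 = n-1-L by omega]
    rcases Nat.lt_or_ge (L+1) n with hc | hc
    · -- L+2 ≤ n
      have hstep := key_step n L (by omega)
      have hZL1 : Z (L+1) n = (-1)^(L+1) * ((L:ℤ)+2)^2 * (n.choose (n-2-L)) * ((n+L+1).choose (n-1)) := by
        rw [Z, if_pos (by omega), show n - (L+1) - 1 = n-2-L by omega]
        push_cast; ring_nf
      rw [hZL1, hZL]
      rw [show ((-1:ℤ))^(L+1) = -(-1)^L by ring]
      linear_combination (-(-1:ℤ)^L) * hstep
    · -- L+1 = n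
      have hLn : L + 1 = n := by omega
      have hZL1 : Z (L+1) n = 0 := by
        rw [Z, if_neg (by omega)]; ring
      have hsq : ((L:ℤ)+1)^2 = (n:ℤ)^2 := by rw [← hLn]; push_cast; ring
      rw [hZL1, hZL, hsq]
      ring

noncomputable def wfun (ℓ : ℕ) : ℕ → ℝ := fun m => if m < ℓ then 1/((m:ℝ)+1) else 0

noncomputable def gfun (n ℓ : ℕ) : ℕ → ℝ := fun m => wfun ℓ m * ∏ k ∈ range n, ((m:ℝ)+k+1)

noncomputable def Npoly (n ℓ : ℕ) : Polynomial ℝ :=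
  Lagrange.interpolate (range n) (fun m : ℕ => (m:ℝ)) (gfun n ℓ)

noncomputable def xfun (n ℓ : ℕ) : ℕ → ℝ := fun j =>
  (Npoly n ℓ).eval (-((j:ℝ)+1)) * (∏ k ∈ (range n).erase j, ((k:ℝ)-(j:ℝ)))⁻¹

lemma hinj1 (n : ℕ) : Set.InjOn (fun m : ℕ => (m:ℝ)) (range n) := fun a _ b _ h =>
  Nat.cast_injective h

lemma hinj2 (n : ℕ) : Set.InjOn (fun m : ℕ => -((m:ℝ)+1)) (range n) := fun a _ b _ h => by
  simp only [neg_inj, add_left_inj] at h; exact_mod_cast h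

lemma solve_row (n ℓ i : ℕ) (hi : i < n) :
    ∑ j ∈ range n, 1/((i:ℝ)+j+1) * xfun n ℓ j = wfun ℓ i := by
  set P := ∏ k ∈ range n, ((i:ℝ)+k+1) with hPdef
  have hP : P ≠ 0 := by
    rw [hPdef]
    exact prod_ne_zero_iff.2 fun k _ => by positivity
  have hNi : (Npoly n ℓ).eval ((i:ℝ)) = gfun n ℓ i :=
    Lagrange.eval_interpolate_at_node _ (hinj1 n) (mem_range.2 hi)
  have hN2 : Npoly n ℓ = Lagrange.interpolate (range n) (fun m : ℕ => -((m:ℝ)+1))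
      (fun j => (Npoly n ℓ).eval (-((j:ℝ)+1))) := by
    have := Lagrange.eq_interpolate (f := Npoly n ℓ) (hinj2 n)
      (by rw [card_range]; exact Lagrange.degree_interpolate_lt _ (hinj1 n) |>.trans_le
            (by rw [card_range]))
    exact this
  have hbasis : ∀ j ∈ range n, eval ((i:ℝ)) (Lagrange.basis (range n) (fun m : ℕ => -((m:ℝ)+1)) j)
      = (∏ k ∈ (range n).erase j, ((k:ℝ)-(j:ℝ)))⁻¹ * ∏ k ∈ (range n).erase j, ((i:ℝ)+k+1) := by
    intro j _
    rw [Lagrange.basis, eval_prod, ← prod_inv_distrib, ← prod_mul_distrib]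
    refine prod_congr rfl fun k _ => ?_
    simp only [Lagrange.basisDivisor, eval_mul, eval_C, eval_sub, eval_X]
    have : -((j:ℝ)+1) - -((k:ℝ)+1) = (k:ℝ) - j := by ring
    rw [this]
    have : (i:ℝ) - -((k:ℝ)+1) = (i:ℝ) + k + 1 := by ring
    rw [this]
  have key : gfun n ℓ i = ∑ j ∈ range n, xfun n ℓ j * ∏ k ∈ (range n).erase j, ((i:ℝ)+k+1) := by
    conv_lhs => rw [← hNi, hN2]
    rw [Lagrange.interpolate_apply, eval_finset_sum]
    refine sum_congr rfl fun j hj => ?_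
    rw [eval_mul, eval_C, hbasis j hj, xfun]
    ring
  have hterm : ∀ j ∈ range n, 1/((i:ℝ)+j+1) * xfun n ℓ j
      = xfun n ℓ j * (∏ k ∈ (range n).erase j, ((i:ℝ)+k+1)) / P := by
    intro j hj
    have hmul : ((i:ℝ)+j+1) * ∏ k ∈ (range n).erase j, ((i:ℝ)+k+1) = P := by
      rw [hPdef]
      exact Finset.mul_prod_erase (range n) (fun k => (i:ℝ)+k+1) (mem_range.2 (mem_range.1 hj))
    have hij : ((i:ℝ)+j+1) ≠ 0 := by positivity
    rw [eq_div_iff hP, ← hmul]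
    field_simp
  rw [sum_congr rfl hterm, ← sum_div, ← key, gfun, mul_div_assoc, div_self hP, mul_one]

lemma x0_eval (n ℓ : ℕ) (hn : 1 ≤ n) :
    xfun n ℓ 0 = ∑ i ∈ range n,
      (if i < ℓ then ((-1:ℝ))^i * (n.choose (n-1-i)) * ((n+i).choose (n-1)) else 0) := by
  have hE : (∏ k ∈ (range n).erase 0, ((k:ℝ)-((0:ℕ):ℝ))) = (Nat.factorial (n-1) : ℝ) := by
    rw [← prod_erase_zero n]
    exact prod_congr rfl fun k _ => by push_cast; ring
  have hbase : ∀ i ∈ range n, eval (-1:ℝ) (Lagrange.basis (range n) (fun m : ℕ => (m:ℝ)) i)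
      = (∏ k ∈ (range n).erase i, ((i:ℝ)-(k:ℝ)))⁻¹ * ∏ k ∈ (range n).erase i, (-1-(k:ℝ)) := by
    intro i _
    rw [Lagrange.basis, eval_prod, ← prod_inv_distrib, ← prod_mul_distrib]
    exact prod_congr rfl fun k _ => by
      simp only [Lagrange.basisDivisor, eval_mul, eval_C, eval_sub, eval_X]
  have heval : xfun n ℓ 0 = (∑ i ∈ range n, gfun n ℓ i *
      ((∏ k ∈ (range n).erase i, ((i:ℝ)-(k:ℝ)))⁻¹ * ∏ k ∈ (range n).erase i, (-1-(k:ℝ))))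
      * ((Nat.factorial (n-1) : ℝ))⁻¹ := by
    rw [xfun, hE, Npoly, Lagrange.interpolate_apply]
    norm_num [eval_finset_sum]
    refine Or.inl (sum_congr rfl fun i hi => ?_)
    rw [hbase i hi]
  rw [heval, sum_mul]
  refine sum_congr rfl fun i hi => ?_
  have hi' : i < n := mem_range.1 hi
  by_cases hil : i < ℓ
  · rw [if_pos hil]
    have hCpr : (-1-(i:ℝ)) * (∏ k ∈ (range n).erase i, (-1-(k:ℝ))) = (-1)^n * Nat.factorial n := by
      rw [Finset.mul_prod_erase (range n) (fun k => -1-(k:ℝ)) (mem_range.2 hi'),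
        prod_neg_one_sub]
    have hD := prod_erase_sub_s17 n i hi'
    have hA := prod_range_add_real i n
    have hfacts : ((n.choose (n-1-i) : ℝ)) * ((n+i).choose (n-1) : ℝ) * ((i:ℝ)+1)^2
        * ((Nat.factorial i : ℝ))^2 * (Nat.factorial (n-1-i) : ℝ) * (Nat.factorial (n-1) : ℝ)
        = (Nat.factorial n : ℝ) * (Nat.factorial (n+i) : ℝ) := by
      have h1 : n.choose (n-1-i) * (Nat.factorial (n-1-i)) * (Nat.factorial (i+1)) =
          Nat.factorial n := by
        have := Nat.choose_mul_factorial_mul_factorial (show n-1-i ≤ n by omega)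
        rwa [show n - (n-1-i) = i+1 by omega] at this
      have h2 : (n+i).choose (n-1) * (Nat.factorial (n-1)) * (Nat.factorial (i+1)) =
          Nat.factorial (n+i) := by
        have := Nat.choose_mul_factorial_mul_factorial (show n-1 ≤ n+i by omega)
        rwa [show n+i - (n-1) = i+1 by omega] at this
      have h3 := congrArg₂ (· * ·) h1 h2
      have := congrArg (Nat.cast : ℕ → ℝ) h3
      push_cast [Nat.factorial_succ] at this
      push_cast
      nlinarith [this]
    have hsign : ((-1:ℝ))^(n-1-i) * (-1)^n = -(-1)^i := by
      rw [← pow_add, show n-1-i+n = i + (2*(n-i-1)+1) by omega, pow_add, pow_succ, pow_mul]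
      norm_num
    have hgi : gfun n ℓ i = 1/((i:ℝ)+1) * (∏ k ∈ range n, ((i:ℝ)+k+1)) := by
      rw [gfun, wfun]; simp [hil]
    have hne1 : ((i:ℝ)+1) ≠ 0 := by positivity
    have hne2 : (-1-(i:ℝ)) ≠ 0 := by
      intro h; have : (i:ℝ) = -2 + 1 := by linarith
      norm_num at this; linarith [Nat.cast_nonneg (α := ℝ) i]
    have hfi : ((Nat.factorial i : ℝ)) ≠ 0 := by positivity
    have hf2 : ((Nat.factorial (n-1-i) : ℝ)) ≠ 0 := by positivity
    have hf3 : ((Nat.factorial (n-1) : ℝ)) ≠ 0 := by positivity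
    have hAval : (∏ k ∈ range n, ((i:ℝ)+k+1)) = (Nat.factorial (i+n) : ℝ) / (Nat.factorial i : ℝ) := by
      rw [eq_div_iff hfi, mul_comm]; exact hA
    have hCval : (∏ k ∈ (range n).erase i, (-1-(k:ℝ))) = (-1)^n * (Nat.factorial n : ℝ) / (-1-(i:ℝ)) := by
      rw [eq_div_iff hne2, mul_comm]; exact hCpr
    rw [hgi, hAval, hD, hCval]
    have hinvsgn : ((-1:ℝ))^(n-1-i) ≠ 0 := by positivity
    have hs1sq : ((-1:ℝ))^(n-1-i) * (-1)^(n-1-i) = 1 := by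
      rw [← pow_add, ← two_mul, pow_mul]; norm_num
    have hcomm : ((Nat.factorial (n+i) : ℝ)) = (Nat.factorial (i+n) : ℝ) := by
      rw [Nat.add_comm]
    rw [hcomm] at hfacts
    field_simp
    linear_combination ((-1:ℝ)^i * (-1)^(n-1-i)) * hfacts
      + ((Nat.factorial n : ℝ) * (Nat.factorial (i+n) : ℝ) * (-1)^(n-1-i)) * hsign
      - ((Nat.factorial n : ℝ) * (Nat.factorial (i+n) : ℝ) * (-1)^n) * hs1sq
  · rw [if_neg hil]
    have : gfun n ℓ i = 0 := by rw [gfun, wfun]; simp [hil]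
    rw [this, zero_mul, zero_mul]


lemma Z_min (ℓ n : ℕ) : Z (min ℓ n) n = Z ℓ n := by
  rcases le_or_gt ℓ n with h | h
  · rw [min_eq_left h]
  · rw [min_eq_right h.le, Z, Z, if_neg (by omega), if_neg (by omega)]
    ring

end Aux

/-- For every `n ≥ 2` and every `ℓ ≥ 1`,
`det(H_n − u^(ℓ) e₁ᵀ) = (1 − Z(ℓ,n)/n²) det(H_n)` over `ℝ`. -/
theorem det_hilbert_sub_u (n ℓ : ℕ) (hn : 2 ≤ n) (hℓ : 1 ≤ ℓ) :
    (hilbertMatrix n - uMatrix n ℓ).det =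
      (1 - (Z ℓ n : ℝ) / (n : ℝ) ^ 2) * (hilbertMatrix n).det := by
  have hn0 : 0 < n := by omega
  set j0 : Fin n := ⟨0, hn0⟩ with hj0
  set w : Fin n → ℝ := fun i => wfun ℓ (i : ℕ) with hwdef
  set x : Fin n → ℝ := fun j => xfun n ℓ (j : ℕ) with hxdef
  have hHU : hilbertMatrix n - uMatrix n ℓ = (hilbertMatrix n).updateCol j0 w := by
    ext i j
    rw [Matrix.sub_apply, Matrix.updateCol_apply]
    by_cases hj : j = j0
    · subst hj
      have hv : (j0 : ℕ) = 0 := rfl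
      simp only [hilbertMatrix, uMatrix, Matrix.of_apply, hwdef, wfun, hv, if_pos rfl,
        Nat.cast_zero, add_zero]
      by_cases hil : (i:ℕ) < ℓ
      · simp [hil]
      · simp [hil]
    · have hj' : ¬ ((j : ℕ) = 0) := fun h => hj (Fin.ext h)
      rw [if_neg hj]
      simp only [hilbertMatrix, uMatrix, Matrix.of_apply, if_neg hj', sub_zero]
  have hmulvec : hilbertMatrix n *ᵥ x = w := by
    ext i
    have h1 : (hilbertMatrix n *ᵥ x) i
        = ∑ j : Fin n, 1/(((i:ℕ):ℝ)+((j:ℕ):ℝ)+1) * xfun n ℓ (j:ℕ) := by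
      simp only [Matrix.mulVec, dotProduct, hilbertMatrix, Matrix.of_apply, hxdef]
    rw [h1, Fin.sum_univ_eq_sum_range (fun j => 1/(((i:ℕ):ℝ)+(j:ℝ)+1) * xfun n ℓ j) n]
    exact solve_row n ℓ i i.2
  have hcramer : Matrix.cramer (hilbertMatrix n) w = (hilbertMatrix n).det • x := by
    rw [Matrix.cramer_eq_adjugate_mulVec, ← hmulvec, Matrix.mulVec_mulVec,
      Matrix.adjugate_mul, Matrix.smul_mulVec, Matrix.one_mulVec]
  have hdet1 : (hilbertMatrix n - uMatrix n ℓ).det = (hilbertMatrix n).det * x j0 := by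
    rw [hHU, ← Matrix.cramer_apply, hcramer]
    simp
  have hL : min ℓ n ≤ n := min_le_right _ _
  have hx0 : x j0 = 1 - (Z ℓ n : ℝ) / (n : ℝ) ^ 2 := by
    have h2 : x j0 = ∑ i ∈ Finset.range n,
        (if i < ℓ then ((-1:ℝ))^i * (n.choose (n-1-i)) * ((n+i).choose (n-1)) else 0) := by
      rw [hxdef]
      exact x0_eval n ℓ (by omega)
    have h3 : ∑ i ∈ Finset.range n,
        (if i < ℓ then ((-1:ℝ))^i * (n.choose (n-1-i)) * ((n+i).choose (n-1)) else 0)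
        = ∑ i ∈ Finset.range (min ℓ n), ((-1:ℝ))^i * (n.choose (n-1-i)) * ((n+i).choose (n-1)) := by
      rw [← Finset.sum_subset (Finset.range_subset_range.2 hL)
        (fun i hi hni => by
          rw [if_neg]
          simp only [Finset.mem_range] at hi hni
          omega)]
      exact Finset.sum_congr rfl fun i hi => by
        rw [if_pos]
        simp only [Finset.mem_range] at hi
        omega
    have h4 := congrArg (Int.cast : ℤ → ℝ) (key_sum n (by omega) (min ℓ n) hL)
    rw [Z_min] at h4
    push_cast at h4
    have hn2 : ((n:ℝ))^2 ≠ 0 := by positivity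
    rw [h2, h3]
    field_simp
    linarith [h4]
  rw [hdet1, hx0]
  ring
end

section
/- Let n ≥ 1 and m ≥ 1 and let (edgeA, edgeB) be a sparsity pattern on n states and m inputs that is accessible to the input nodes. Let k ≥ 1 and let i be a state node belonging to U(k). Then for every matrix A : Matrix (Fin n) (Fin n) ℝ with A a b = 0 whenever ¬ edgeA a b, the i-th row of A^k is zero: (A^k) i j = 0 for every j ∈ Fin n. -/
open Matrix

lemma chain_of_rtg {n : ℕ} {edgeA : Fin n → Fin n → Prop} {j' j : Fin n}
    (h : Relation.ReflTransGen (fun a b => edgeA b a) j' j) :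
    ∃ d, ∃ u : ℕ → Fin n, u 0 = j' ∧ u d = j ∧ ∀ s, s < d → edgeA (u (s+1)) (u s) := by
  induction h with
  | refl => exact ⟨0, fun _ => j', rfl, rfl, fun s hs => absurd hs (Nat.not_lt_zero s)⟩
  | @tail b c hbc hrel ih =>
    obtain ⟨d, u, h0, hd, he⟩ := ih
    refine ⟨d + 1, fun s => if s ≤ d then u s else c, by simp [h0], by simp, ?_⟩
    intro s hs
    rcases Nat.lt_or_ge s d with h1 | h1
    · simp only [Nat.le_of_lt h1, Nat.succ_le_of_lt h1, if_pos]
      exact he s h1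
    · have : s = d := Nat.le_antisymm (Nat.lt_succ_iff.mp hs) h1
      subst this
      simp only [le_refl, if_pos, Nat.lt_irrefl, Nat.not_succ_le_self, if_neg, hd]
      exact hrel

lemma chain_of_pow_ne {n : ℕ} {edgeA : Fin n → Fin n → Prop}
    {A : Matrix (Fin n) (Fin n) ℝ} (hA : ∀ a b : Fin n, ¬ edgeA a b → A a b = 0)
    (k : ℕ) (i j : Fin n) (h : (A ^ k) i j ≠ 0) :
    ∃ v : ℕ → Fin n, v 0 = j ∧ v k = i ∧ ∀ s, s < k → edgeA (v (s+1)) (v s) := by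
  induction k generalizing i with
  | zero =>
    have : i = j := by
      by_contra hij
      simp [pow_zero, Matrix.one_apply_ne hij] at h
    exact ⟨fun _ => j, rfl, this ▸ rfl, fun s hs => absurd hs (Nat.not_lt_zero s)⟩
  | succ k ih =>
    rw [pow_succ', Matrix.mul_apply] at h
    obtain ⟨x, hx⟩ := Finset.exists_ne_zero_of_sum_ne_zero h
    have h1 : A i x ≠ 0 := fun h0 => hx.2 (by simp [h0])
    have h2 : (A ^ k) x j ≠ 0 := fun h0 => hx.2 (by simp [h0])
    have hedge : edgeA i x := by by_contra he; exact h1 (hA i x he)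
    obtain ⟨v, h0, hkk, he⟩ := ih x h2
    refine ⟨fun s => if s ≤ k then v s else i, by simp [h0], by simp, ?_⟩
    intro s hs
    rcases Nat.lt_or_ge s k with hc | hc
    · simp only [Nat.le_of_lt hc, Nat.succ_le_of_lt hc, if_pos]
      exact he s hc
    · have : s = k := Nat.le_antisymm (Nat.lt_succ_iff.mp hs) hc
      subst this
      simp only [le_refl, if_pos, Nat.not_succ_le_self, if_neg, hkk]
      exact hedge

/-- Let `(edgeA, edgeB)` be a sparsity pattern that is accessible to the input nodes,
let `k ≥ 1`, and let `i` be a state node in `U(k)`. Then for every matrix `A` compliant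
with `edgeA`, the `i`-th row of `A ^ k` vanishes. -/
theorem row_of_pow_eq_zero_of_mem_U
    (n m : ℕ) (hn : 1 ≤ n) (hm : 1 ≤ m)
    (edgeA : Fin n → Fin n → Prop) (edgeB : Fin n → Fin m → Prop)
    (hacc : ∀ i : Fin n, ∃ (j : Fin n) (l : Fin m), edgeB j l ∧
      Relation.ReflTransGen (fun a b => edgeA b a) j i)
    (k : ℕ) (hk : 1 ≤ k) (i : Fin n) (hi : i ∈ U edgeA edgeB k)
    (A : Matrix (Fin n) (Fin n) ℝ)
    (hA : ∀ a b : Fin n, ¬ edgeA a b → A a b = 0) :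
    ∀ j : Fin n, (A ^ k) i j = 0 := by
  intro j
  by_contra h
  obtain ⟨v, hv0, hvk, hve⟩ := chain_of_pow_ne hA k i j h
  obtain ⟨j', l, hB, hrtg⟩ := hacc j
  obtain ⟨d, u, hu0, hud, hue⟩ := chain_of_rtg hrtg
  apply hi
  refine ⟨1 + d + k, by omega, l, by omega, fun s => if s ≤ 1 + d then u (s - 1) else v (s - (1 + d)), ?_, ?_, ?_⟩
  · simpa [hu0] using hB
  · intro s hs1 hsr
    dsimp only
    rcases Nat.lt_or_ge s (1 + d) with hc | hc
    · have hs1d : s + 1 ≤ 1 + d := hc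
      rw [if_pos (Nat.le_of_lt hc), if_pos hs1d]
      have : s + 1 - 1 = (s - 1) + 1 := by omega
      rw [this]
      exact hue (s - 1) (by omega)
    · rcases Nat.eq_or_lt_of_le hc with hc2 | hc2
      · rw [if_pos (le_of_eq hc2.symm), if_neg (by omega)]
        have e1 : s - 1 = d := by omega
        have e2 : s + 1 - (1 + d) = 1 := by omega
        rw [e1, e2, hud, ← hv0]
        exact hve 0 (by omega)
      · rw [if_neg (by omega), if_neg (by omega)]
        have e : s + 1 - (1 + d) = (s - (1 + d)) + 1 := by omega
        rw [e]
        exact hve (s - (1 + d)) (by omega)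
  · dsimp only
    rw [if_neg (by omega)]
    have : 1 + d + k - (1 + d) = k := by omega
    rw [this, hvk]
end
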